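/- arXiv:0708.3598 — 7 statements merged into one kernel-verified Lean document; each statement's English description precedes it below -/
import Mathlib

section
/- Let L be a Z-graded vector space with a left Leibniz bracket [·,·] of degree n (i.e. [a,[b,c]] = [[a,b],c] + (-1)^{(|a|+n)(|b|+n)}[b,[a,c]] for homogeneous a,b,c), and let d : L → L be a degree m map with d² = 0 which is a derivation of the bracket (d[a,b] = [da,b] + (-1)^{m(|a|+n)}[a,db]). Then the derived bracket [a,b]_d := (-1)^{m(n+|a|)+1}[da,b] is a left Leibniz bracket of degree n+m, and d is a derivation of [·,·]_d. -/
/-- The sign `(-1)^x` (for an integer exponent `x`; only the parity of `x` matters). -/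
def gsgn (K : Type*) [Field K] (x : ℤ) : K := (-1 : K) ^ x.natAbs

lemma gsgn_eq (K : Type*) [Field K] (x : ℤ) : gsgn K x = if Even x then (1:K) else -1 := by
  unfold gsgn
  rcases Int.even_or_odd x with hx | hx
  · rw [if_pos hx, Even.neg_one_pow (Int.natAbs_even.mpr hx)]
  · rw [if_neg (by simpa [Int.not_even_iff_odd] using hx),
      Odd.neg_one_pow (Int.natAbs_odd.mpr hx)]

lemma gsgn_mul (K : Type*) [Field K] (x y : ℤ) : gsgn K x * gsgn K y = gsgn K (x + y) := by
  rw [gsgn_eq, gsgn_eq, gsgn_eq]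
  rcases Int.even_or_odd x with hx | hx <;> rcases Int.even_or_odd y with hy | hy
  · rw [if_pos hx, if_pos hy, if_pos (hx.add hy), one_mul]
  · rw [if_pos hx, if_neg (by simpa [Int.not_even_iff_odd] using hy), one_mul,
      if_neg (by simpa [Int.not_even_iff_odd] using hx.add_odd hy)]
  · rw [if_neg (by simpa [Int.not_even_iff_odd] using hx), if_pos hy,
      if_neg (by simpa [Int.not_even_iff_odd] using hx.add_even hy), mul_one]
  · rw [if_neg (by simpa [Int.not_even_iff_odd] using hx),
      if_neg (by simpa [Int.not_even_iff_odd] using hy), if_pos (hx.add_odd hy)]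
    norm_num

lemma gsgn_congr (K : Type*) [Field K] {x y : ℤ} (h : Even (x - y)) : gsgn K x = gsgn K y := by
  rw [gsgn_eq, gsgn_eq]
  rw [Int.even_sub] at h
  rcases Int.even_or_odd x with hx | hx
  · rw [if_pos hx, if_pos (h.mp hx)]
  · rw [if_neg (by simpa [Int.not_even_iff_odd] using hx),
      if_neg (by rw [Int.not_even_iff_odd, ← Int.not_even_iff_odd]; intro hy; exact
        (Int.not_even_iff_odd.mpr hx) (h.mpr hy))]

/-- **Derived brackets (Koszul, Kosmann-Schwarzbach).**
Let `L` be a `ℤ`-graded vector space with a left Leibniz (Loday) bracket `br` of degree `n`,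
and let `d : L → L` be a map of degree `m` with `d ∘ d = 0` which is a derivation of the
bracket.  Then the derived bracket `[a,b]_d := (-1)^(m(n+|a|)+1) • br (d a) b` is a left
Leibniz bracket of degree `n + m`, and `d` is a derivation of the derived bracket. -/
theorem derived_bracket_left_leibniz
    (K : Type*) [Field K] [CharZero K]
    (L : Type*) [AddCommGroup L] [Module K L]
    (𝒜 : ℤ → Submodule K L)
    (n m : ℤ)
    (br : L →ₗ[K] L →ₗ[K] L)
    (d : L →ₗ[K] L)
    -- the bracket has degree `n`
    (hbrdeg : ∀ (i j : ℤ), ∀ a ∈ 𝒜 i, ∀ b ∈ 𝒜 j, br a b ∈ 𝒜 (i + j + n))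
    -- graded left Leibniz identity for `br`
    (hleib : ∀ (i j : ℤ), ∀ a ∈ 𝒜 i, ∀ b ∈ 𝒜 j, ∀ c : L,
      br a (br b c) = br (br a b) c + gsgn K ((i + n) * (j + n)) • br b (br a c))
    -- `d` has degree `m`
    (hddeg : ∀ (i : ℤ), ∀ a ∈ 𝒜 i, d a ∈ 𝒜 (i + m))
    -- `d` is a differential
    (hd2 : d ∘ₗ d = 0)
    -- `d` is a derivation of the bracket
    (hder : ∀ (i : ℤ), ∀ a ∈ 𝒜 i, ∀ b : L,
      d (br a b) = br (d a) b + gsgn K (m * (i + n)) • br a (d b)) :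
    -- (1) the derived bracket satisfies the graded left Leibniz identity of degree `n + m`
    (∀ (i j : ℤ), ∀ a ∈ 𝒜 i, ∀ b ∈ 𝒜 j, ∀ c : L,
      gsgn K (m * (n + i) + 1) •
          br (d a) (gsgn K (m * (n + j) + 1) • br (d b) c)
        = gsgn K (m * (n + (i + j + n + m)) + 1) •
            br (d (gsgn K (m * (n + i) + 1) • br (d a) b)) c
          + gsgn K ((i + (n + m)) * (j + (n + m))) •
              (gsgn K (m * (n + j) + 1) •
                br (d b) (gsgn K (m * (n + i) + 1) • br (d a) c)))
    ∧
    -- (2) `d` is a derivation of the derived bracket (of degree `n + m`)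
    (∀ (i j : ℤ), ∀ a ∈ 𝒜 i, ∀ b ∈ 𝒜 j,
      d (gsgn K (m * (n + i) + 1) • br (d a) b)
        = gsgn K (m * (n + (i + m)) + 1) • br (d (d a)) b
          + gsgn K (m * (i + (n + m))) •
              (gsgn K (m * (n + i) + 1) • br (d a) (d b))) := by
  have h0 : ∀ x : L, d (d x) = 0 := fun x => by
    have := LinearMap.congr_fun hd2 x; simpa using this
  have key : ∀ (i : ℤ), ∀ a ∈ 𝒜 i, ∀ b : L,
      d (gsgn K (m * (n + i) + 1) • br (d a) b)
        = (gsgn K (m * (n + i) + 1) * gsgn K (m * (i + m + n))) • br (d a) (d b) := by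
    intro i a ha b
    rw [map_smul, hder (i + m) (d a) (hddeg i a ha) b, h0, LinearMap.map_zero₂, zero_add,
      smul_smul]
  constructor
  · intro i j a ha b hb c
    rw [key i a ha b]
    have hL := hleib (i + m) (j + m) (d a) (hddeg i a ha) (d b) (hddeg j b hb) c
    simp only [map_smul, LinearMap.smul_apply, smul_smul]
    rw [hL]
    rw [smul_add, smul_smul]
    congr 1
    · congr 1
      simp only [gsgn_mul]
      apply gsgn_congr K
      exact ⟨-(m * (n + i + m)), by ring⟩
    · congr 1
      simp only [gsgn_mul]
      apply gsgn_congr K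
      exact ⟨0, by ring⟩
  · intro i j a ha b hb
    rw [key i a ha b, h0, LinearMap.map_zero₂, smul_zero, zero_add, smul_smul]
    congr 1
    simp only [gsgn_mul]
    apply gsgn_congr K
    exact ⟨0, by ring⟩
end

section
/- Let (L, μ, [·,·], d) be a differential graded n-Poisson algebra (d of degree m = ±1, d² = 0, d a derivation of both μ and the bracket) and K ⊆ L a coisotropic ideal, i.e. K·L ⊆ K, [K,K] ⊆ K and dK ⊆ K. Set V = L/K with induced differential d. Then for cycles ã, b̃ ∈ Z V represented by a, b ∈ L, the formula [ã,b̃]_{d,K} := (-1)^{m(|a|+n)+1}·(class of [da,b] in V modulo dV) is a well-defined Poisson bracket of degree n+m on the cohomology H V = Z V / dV. -/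
section GsgnLemmas

private lemma gsgn_even {K : Type*} [Field K] {x : ℤ} (h : Even x) : gsgn K x = 1 := by
  unfold gsgn; exact (Int.natAbs_even.mpr h).neg_one_pow

private lemma gsgn_odd {K : Type*} [Field K] {x : ℤ} (h : Odd x) : gsgn K x = -1 := by
  unfold gsgn; exact (Int.natAbs_odd.mpr h).neg_one_pow

private lemma gsgn_add (K : Type*) [Field K] (x y : ℤ) :
    gsgn K (x + y) = gsgn K x * gsgn K y := by
  rcases Int.even_or_odd x with hx | hx <;> rcases Int.even_or_odd y with hy | hy
  · rw [gsgn_even hx, gsgn_even hy, gsgn_even (hx.add hy), one_mul]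
  · rw [gsgn_even hx, gsgn_odd hy, gsgn_odd (hx.add_odd hy), one_mul]
  · rw [gsgn_odd hx, gsgn_even hy, gsgn_odd (hx.add_even hy), mul_one]
  · rw [gsgn_odd hx, gsgn_odd hy, gsgn_even (hx.add_odd hy), neg_mul_neg, one_mul]

private lemma gsgn_eq_of {K : Type*} [Field K] {x y : ℤ} (h : Even (x - y)) :
    gsgn K x = gsgn K y := by
  have hiff : Even x ↔ Even y := Int.even_sub.mp h
  rcases Int.even_or_odd x with hx | hx
  · rw [gsgn_even hx, gsgn_even (hiff.mp hx)]
  · rw [gsgn_odd hx, gsgn_odd (Int.not_even_iff_odd.mp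
      (fun hy => (Int.not_even_iff_odd.mpr hx) (hiff.mpr hy)))]

private lemma gsgn_add_one (K : Type*) [Field K] (x : ℤ) :
    gsgn K (x + 1) = - gsgn K x := by
  rw [gsgn_add, gsgn_odd odd_one, mul_neg_one]

end GsgnLemmas


/-- **Reduced derived bracket on the cohomology of a coisotropic quotient.**
Let `(L, mul, br, d)` be a differential graded `n`-Poisson algebra (`d` of degree
`m = ±1`, `d² = 0`, `d` a derivation of `mul` and of `br`) and `Ksub ⊆ L` a coisotropic
ideal (`Ksub·L ⊆ Ksub`, `br Ksub Ksub ⊆ Ksub`, `d Ksub ⊆ Ksub`).  In `V = L/Ksub` with the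
induced differential, cycles are classes of `a ∈ L` with `d a ∈ Ksub`, and the boundaries
`d V` pull back to the submodule `I := Ksub ⊔ range d`.  Then the reduced bracket
`[ã,b̃]_{d,K} := (-1)^(m(|a|+n)+1) • (class of br (d a) b modulo d V)` is well defined on
the cohomology `H V` and is a graded Poisson bracket of degree `n + m` there: it is
independent of the representatives, lands in cycles, is graded antisymmetric, and
satisfies the graded Leibniz rule and the graded Jacobi identity modulo `I`. -/
theorem reduced_derived_bracket_is_poisson
    (K : Type*) [Field K] [CharZero K]
    (L : Type*) [AddCommGroup L] [Module K L]
    (𝒜 : ℤ → Submodule K L)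
    (n m : ℤ) (hm : m = 1 ∨ m = -1)
    (mul : L →ₗ[K] L →ₗ[K] L)
    (br : L →ₗ[K] L →ₗ[K] L)
    (d : L →ₗ[K] L)
    -- degrees
    (hmuldeg : ∀ (i j : ℤ), ∀ a ∈ 𝒜 i, ∀ b ∈ 𝒜 j, mul a b ∈ 𝒜 (i + j))
    (hbrdeg : ∀ (i j : ℤ), ∀ a ∈ 𝒜 i, ∀ b ∈ 𝒜 j, br a b ∈ 𝒜 (i + j + n))
    (hddeg : ∀ (i : ℤ), ∀ a ∈ 𝒜 i, d a ∈ 𝒜 (i + m))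
    -- `mul` supercommutative and associative
    (hcomm : ∀ (i j : ℤ), ∀ a ∈ 𝒜 i, ∀ b ∈ 𝒜 j, mul a b = gsgn K (i * j) • mul b a)
    (hassoc : ∀ a b c : L, mul (mul a b) c = mul a (mul b c))
    -- `br` a graded Poisson bracket of degree `n`
    (hanti : ∀ (i j : ℤ), ∀ a ∈ 𝒜 i, ∀ b ∈ 𝒜 j,
      br a b = - (gsgn K ((i + n) * (j + n)) • br b a))
    (hjac : ∀ (i j : ℤ), ∀ a ∈ 𝒜 i, ∀ b ∈ 𝒜 j, ∀ c : L,
      br a (br b c) = br (br a b) c + gsgn K ((i + n) * (j + n)) • br b (br a c))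
    (hleib : ∀ (i j : ℤ), ∀ a ∈ 𝒜 i, ∀ b ∈ 𝒜 j, ∀ c : L,
      br a (mul b c) = mul (br a b) c + gsgn K (j * (i + n)) • mul b (br a c))
    -- `d` a square-zero derivation of `mul` and of `br`
    (hd2 : d ∘ₗ d = 0)
    (hdmul : ∀ (i : ℤ), ∀ a ∈ 𝒜 i, ∀ b : L,
      d (mul a b) = mul (d a) b + gsgn K (m * i) • mul a (d b))
    (hdbr : ∀ (i : ℤ), ∀ a ∈ 𝒜 i, ∀ b : L,
      d (br a b) = br (d a) b + gsgn K (m * (i + n)) • br a (d b))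
    -- `Ksub` a coisotropic ideal
    (Ksub : Submodule K L)
    (hKmul : ∀ x ∈ Ksub, ∀ y : L, mul x y ∈ Ksub ∧ mul y x ∈ Ksub)
    (hKbr : ∀ x ∈ Ksub, ∀ y ∈ Ksub, br x y ∈ Ksub)
    (hKd : ∀ x ∈ Ksub, d x ∈ Ksub) :
    -- `I = Ksub ⊔ range d` is the preimage in `L` of the boundaries of `V = L/Ksub`
    (let I : Submodule K L := Ksub ⊔ LinearMap.range d
     -- (0) the (signed) bracket of two cycles is again a cycle
     (∀ (i j : ℤ), ∀ a ∈ 𝒜 i, ∀ b ∈ 𝒜 j, d a ∈ Ksub → d b ∈ Ksub →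
        d (br (d a) b) ∈ Ksub)
     ∧
     -- (1) well-definedness: independence of the chosen representatives of the classes
     (∀ (i j : ℤ), ∀ a ∈ 𝒜 i, ∀ a' ∈ 𝒜 i, ∀ b ∈ 𝒜 j, ∀ b' ∈ 𝒜 j,
        d a ∈ Ksub → d a' ∈ Ksub → d b ∈ Ksub → d b' ∈ Ksub →
        a - a' ∈ Ksub → b - b' ∈ Ksub →
        br (d a) b - br (d a') b' ∈ I)
     ∧
     -- (2) graded antisymmetry of degree `n + m` modulo `I`
     (∀ (i j : ℤ), ∀ a ∈ 𝒜 i, ∀ b ∈ 𝒜 j, d a ∈ Ksub → d b ∈ Ksub →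
        gsgn K (m * (i + n) + 1) • br (d a) b
          + gsgn K ((i + (n + m)) * (j + (n + m))) •
              (gsgn K (m * (j + n) + 1) • br (d b) a) ∈ I)
     ∧
     -- (3) graded Leibniz rule of degree `n + m` modulo `I`
     (∀ (i j k : ℤ), ∀ a ∈ 𝒜 i, ∀ b ∈ 𝒜 j, ∀ c ∈ 𝒜 k,
        d a ∈ Ksub → d b ∈ Ksub → d c ∈ Ksub →
        gsgn K (m * (i + n) + 1) • br (d a) (mul b c)
          - mul (gsgn K (m * (i + n) + 1) • br (d a) b) c
          - gsgn K (j * (i + (n + m))) •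
              mul b (gsgn K (m * (i + n) + 1) • br (d a) c) ∈ I)
     ∧
     -- (4) graded Jacobi identity of degree `n + m` modulo `I`
     (∀ (i j k : ℤ), ∀ a ∈ 𝒜 i, ∀ b ∈ 𝒜 j, ∀ c ∈ 𝒜 k,
        d a ∈ Ksub → d b ∈ Ksub → d c ∈ Ksub →
        gsgn K (m * (i + n) + 1) •
            br (d a) (gsgn K (m * (j + n) + 1) • br (d b) c)
          - gsgn K (m * ((i + j + n + m) + n) + 1) •
              br (d (gsgn K (m * (i + n) + 1) • br (d a) b)) c
          - gsgn K ((i + (n + m)) * (j + (n + m))) •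
              (gsgn K (m * (j + n) + 1) •
                br (d b) (gsgn K (m * (i + n) + 1) • br (d a) c)) ∈ I)) := by

  intro I
  have hm2 : m * m = 1 := by rcases hm with rfl | rfl <;> norm_num
  have hdd : ∀ x : L, d (d x) = 0 := fun x => by
    simpa using LinearMap.congr_fun hd2 x
  have hz : ∀ v : L, v = 0 → v ∈ I := fun v hv => hv ▸ zero_mem I
  refine ⟨?_, ?_, ?_, ?_, ?_⟩
  · -- (0) bracket of cycles is a cycle
    intro i j a ha b hb hda hdb
    rw [hdbr (i + m) (d a) (hddeg i a ha) b, hdd a]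
    simp only [map_zero, LinearMap.zero_apply, zero_add]
    exact Submodule.smul_mem _ _ (hKbr _ hda _ hdb)
  · -- (1) well-definedness
    intro i j a ha a' ha' b hb b' hb' hda hda' hdb hdb' hx hy
    have e1 : br (d a) b - br (d a') b' =
        br (d (a - a')) b + br (d a') (b - b') := by
      simp only [map_sub, LinearMap.sub_apply]; abel
    have e3 : br (d (a - a')) b =
        d (br (a - a') b) - gsgn K (m * (i + n)) • br (a - a') (d b) := by
      rw [hdbr i (a - a') (sub_mem ha ha') b]; abel
    rw [e1, e3]
    refine add_mem (sub_mem ?_ ?_) ?_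
    · exact Submodule.mem_sup_right ⟨br (a - a') b, rfl⟩
    · exact Submodule.mem_sup_left (Submodule.smul_mem _ _ (hKbr _ hx _ hdb))
    · exact Submodule.mem_sup_left (hKbr _ hda' _ hy)
  · -- (2) antisymmetry
    intro i j a ha b hb hda hdb
    have hsc : gsgn K ((i + (n + m)) * (j + (n + m))) * gsgn K (m * (j + n) + 1)
        = -(gsgn K (m * (i + n) + 1) *
            (gsgn K (m * (i + n)) * gsgn K ((i + n) * ((j + m) + n)))) := by
      rw [← gsgn_add, ← gsgn_add, ← gsgn_add, ← gsgn_add_one]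
      exact gsgn_eq_of ⟨m * (j + n) - m * (i + n), by linear_combination hm2⟩
    have key : gsgn K (m * (i + n) + 1) • br (d a) b
        + gsgn K ((i + (n + m)) * (j + (n + m))) •
            (gsgn K (m * (j + n) + 1) • br (d b) a)
        = d (gsgn K (m * (i + n) + 1) • br a b) := by
      rw [map_smul, hdbr i a ha b, hanti i (j + m) a ha (d b) (hddeg j b hb)]
      simp only [smul_add, smul_neg, smul_smul]
      rw [hsc]
      module
    rw [key]
    exact Submodule.mem_sup_right ⟨gsgn K (m * (i + n) + 1) • br a b, rfl⟩
  · -- (3) Leibniz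
    intro i j k a ha b hb c hc hda hdb hdc
    apply hz
    have h := hleib (i + m) j (d a) (hddeg i a ha) b hb c
    rw [show j * ((i + m) + n) = j * (i + (n + m)) from by ring] at h
    rw [h]
    simp only [map_smul, LinearMap.smul_apply]
    module
  · -- (4) Jacobi
    intro i j k a ha b hb c hc hda hdb hdc
    apply hz
    have p2 : br (d (gsgn K (m * (i + n) + 1) • br (d a) b)) c
        = gsgn K (m * (i + n) + 1) • br (d (br (d a) b)) c := by
      simp only [map_smul, LinearMap.smul_apply]
    have h4 : d (br (d a) b) = gsgn K (m * ((i + m) + n)) • br (d a) (d b) := by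
      rw [hdbr (i + m) (d a) (hddeg i a ha) b, hdd a]
      simp
    have h5 := hjac (i + m) (j + m) (d a) (hddeg i a ha) (d b) (hddeg j b hb) c
    have hs1 : gsgn K (m * (j + n) + 1)
        = gsgn K (m * ((i + j + n + m) + n) + 1) * gsgn K (m * ((i + m) + n)) := by
      rw [← gsgn_add]
      exact gsgn_eq_of ⟨-(m * (i + n + m)), by ring⟩
    have hs2 : gsgn K (((i + m) + n) * ((j + m) + n))
        = gsgn K ((i + (n + m)) * (j + (n + m))) := gsgn_eq_of ⟨0, by ring⟩
    rw [p2, h4]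
    simp only [map_smul, LinearMap.smul_apply]
    rw [h5, hs2, hs1]
    module
end

section
/- First perturbation lemma: Let (X,d_X) and (Y,d_Y) be filtered cochain complexes of K-modules with a contraction (i : X → Y, p : Y → X, h_Y : Y → Y[-1]) satisfying p∘i = id_X, d_Y h_Y + h_Y d_Y = id_Y − i∘p, and the side condition p∘h_Y = 0. Let D_Y = d_Y + t_Y be a perturbation of d_Y (D_Y² = 0) such that t_Y h_Y + h_Y t_Y raises the filtration degree, D_X := d_X + p t_Y i satisfies D_X² = 0, and (p t_Y i)∘p = p∘t_Y. Then setting H_Y = h_Y (id + t_Y h_Y + h_Y t_Y)^{-1} and I x = i x − H_Y(t_Y i x − i t_X x), the data (I, p, H_Y) form a contraction from (X,D_X) to (Y,D_Y) satisfying p∘H_Y = 0; moreover if all side conditions h_Y² = 0, h_Y i = 0, p h_Y = 0 hold for the original contraction, they hold for the perturbed one. -/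
/-- **First perturbation lemma.**
Given a contraction `(i, p, h)` of filtered complexes `(X, dX)` and `(Y, dY)` with
`p ∘ i = id`, `dY h + h dY = id - i p` and the side condition `p ∘ h = 0`, and a
perturbation `DY = dY + t` of `dY` such that `T := t h + h t` raises the filtration
degree (so that `id + T` is invertible, with inverse `S`), such that
`DX := dX + p t i` squares to zero and `(p t i) ∘ p = p ∘ t`, the maps
`H := h ∘ S` and `I := i - H ∘ (t ∘ i - i ∘ (p t i))` form a contraction
`(I, p, H)` from `(X, DX)` to `(Y, DY)` satisfying `p ∘ H = 0`; moreover if all side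
conditions (`h² = 0`, `h i = 0`, `p h = 0`) hold for the original contraction then they
hold for the perturbed one. -/
theorem perturbation_lemma_one
    (K : Type*) [Field K]
    (X Y : Type*) [AddCommGroup X] [Module K X] [AddCommGroup Y] [Module K Y]
    (dX : X →ₗ[K] X) (dY : Y →ₗ[K] Y)
    (i : X →ₗ[K] Y) (p : Y →ₗ[K] X) (h : Y →ₗ[K] Y)
    (t : Y →ₗ[K] Y)
    -- descending Hausdorff filtration, preserved by the structure maps
    (F : ℕ → Submodule K Y)
    (hFdesc : ∀ k, F (k + 1) ≤ F k)
    (hFhaus : (⨅ k, F k) = ⊥)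
    (hFd : ∀ k, ∀ y ∈ F k, dY y ∈ F k)
    (hFh : ∀ k, ∀ y ∈ F k, h y ∈ F k)
    (hFt : ∀ k, ∀ y ∈ F k, t y ∈ F k)
    -- the initiator raises the filtration …
    (hraise : ∀ k, ∀ y ∈ F k, (t ∘ₗ h + h ∘ₗ t) y ∈ F (k + 1))
    -- … so that `id + t h + h t` is invertible, with inverse `S`
    (S : Y →ₗ[K] Y)
    (hS1 : S ∘ₗ (LinearMap.id + (t ∘ₗ h + h ∘ₗ t)) = LinearMap.id)
    (hS2 : (LinearMap.id + (t ∘ₗ h + h ∘ₗ t)) ∘ₗ S = LinearMap.id)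
    -- complexes and contraction data
    (hdX2 : dX ∘ₗ dX = 0) (hdY2 : dY ∘ₗ dY = 0)
    (hichain : dY ∘ₗ i = i ∘ₗ dX)
    (hpchain : dX ∘ₗ p = p ∘ₗ dY)
    (hpi : p ∘ₗ i = LinearMap.id)
    (hhom : dY ∘ₗ h + h ∘ₗ dY = LinearMap.id - i ∘ₗ p)
    -- side condition (sc3)
    (hsc3 : p ∘ₗ h = 0)
    -- the perturbation
    (hDY2 : (dY + t) ∘ₗ (dY + t) = 0)
    (hDX2 : (dX + p ∘ₗ t ∘ₗ i) ∘ₗ (dX + p ∘ₗ t ∘ₗ i) = 0)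
    (hcomm : (p ∘ₗ t ∘ₗ i) ∘ₗ p = p ∘ₗ t) :
    (let tX : X →ₗ[K] X := p ∘ₗ t ∘ₗ i
     let DX : X →ₗ[K] X := dX + tX
     let DY : Y →ₗ[K] Y := dY + t
     let H : Y →ₗ[K] Y := h ∘ₗ S
     let I : X →ₗ[K] Y := i - H ∘ₗ (t ∘ₗ i - i ∘ₗ tX)
     -- `(I, p, H)` is a contraction from `(X, DX)` to `(Y, DY)` …
     p ∘ₗ I = LinearMap.id ∧
     DY ∘ₗ I = I ∘ₗ DX ∧
     DX ∘ₗ p = p ∘ₗ DY ∧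
     DY ∘ₗ H + H ∘ₗ DY = LinearMap.id - I ∘ₗ p ∧
     -- … with the side condition (sc3)
     p ∘ₗ H = 0 ∧
     -- and if all side conditions hold for `(i, p, h)` they hold for `(I, p, H)`
     (h ∘ₗ h = 0 → h ∘ₗ i = 0 → (H ∘ₗ H = 0 ∧ H ∘ₗ I = 0))) := by
  
  -- pointwise forms of some hypotheses
  have hpi' : ∀ y, p (i y) = y := fun y => by
    simpa using LinearMap.ext_iff.mp hpi y
  have hsc3' : ∀ y, p (h y) = 0 := fun y => by
    simpa using LinearMap.ext_iff.mp hsc3 y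
  have hcomm' : ∀ y, p (t (i (p y))) = p (t y) := fun y => by
    simpa using LinearMap.ext_iff.mp hcomm y
  -- `p ∘ S = p`
  have pS : p ∘ₗ S = p := by
    ext y
    have e0 := LinearMap.ext_iff.mp hS2 y
    simp only [LinearMap.comp_apply, LinearMap.add_apply, LinearMap.id_apply] at e0
    have e := congrArg p e0
    simp only [map_add] at e
    have e2 : p (t (h (S y))) = 0 := by
      rw [← hcomm' (h (S y)), hsc3' (S y)]
      simp
    rw [hsc3' (t (S y)), e2] at e
    simp only [add_zero] at e
    simpa using e
  -- mul-form hypotheses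
  have mS1 : S * (1 + (t * h + h * t)) = 1 := hS1
  have mS2 : (1 + (t * h + h * t)) * S = 1 := hS2
  have mdY2 : dY * dY = 0 := hdY2
  have mDY2 : (dY + t) * (dY + t) = 0 := hDY2
  have z5 : dY * h + h * dY = 1 - i ∘ₗ p := hhom
  have z4 : dY * t + t * dY + t * t = 0 := by
    have c : dY * t + t * dY + t * t = (dY + t) * (dY + t) - dY * dY := by noncomm_ring
    rw [c, mDY2, mdY2, sub_zero]
  have mdX2 : dX * dX = 0 := hdX2
  have mDX2 : (dX + p ∘ₗ t ∘ₗ i) * (dX + p ∘ₗ t ∘ₗ i) = 0 := hDX2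
  have z4X : dX * (p ∘ₗ t ∘ₗ i) + (p ∘ₗ t ∘ₗ i) * dX + (p ∘ₗ t ∘ₗ i) * (p ∘ₗ t ∘ₗ i) = 0 := by
    have c : dX * (p ∘ₗ t ∘ₗ i) + (p ∘ₗ t ∘ₗ i) * dX + (p ∘ₗ t ∘ₗ i) * (p ∘ₗ t ∘ₗ i)
        = (dX + p ∘ₗ t ∘ₗ i) * (dX + p ∘ₗ t ∘ₗ i) - dX * dX := by noncomm_ring
    rw [c, mDX2, mdX2, sub_zero]
  -- facts about `A := t ∘ i - i ∘ (p t i)`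
  have pA : p ∘ₗ (t ∘ₗ i - i ∘ₗ (p ∘ₗ t ∘ₗ i)) = 0 := by
    ext x; simp [hpi']
  have Ap : (t ∘ₗ i - i ∘ₗ (p ∘ₗ t ∘ₗ i)) ∘ₗ p = t * (i ∘ₗ p) - (i ∘ₗ p) * t := by
    ext y
    simp only [LinearMap.comp_apply, LinearMap.sub_apply, Module.End.mul_apply, map_sub]
    rw [hcomm' y]
  have ipS : (i ∘ₗ p) * S = i ∘ₗ p := by
    have e : (i ∘ₗ p) ∘ₗ S = i ∘ₗ p := by rw [LinearMap.comp_assoc, pS]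
    exact e
  have BS : (t * (i ∘ₗ p) - (i ∘ₗ p) * t) * S = t * (i ∘ₗ p) - (i ∘ₗ p) * t := by
    rw [← Ap]
    have e : ((t ∘ₗ i - i ∘ₗ (p ∘ₗ t ∘ₗ i)) ∘ₗ p) ∘ₗ S = (t ∘ₗ i - i ∘ₗ (p ∘ₗ t ∘ₗ i)) ∘ₗ p := by
      rw [LinearMap.comp_assoc, pS]
    exact e
  -- commutator of `DY` with `T`
  have commC : (dY + t) * (t * h + h * t) - (t * h + h * t) * (dY + t)
      = t * (i ∘ₗ p) - (i ∘ₗ p) * t := by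
    have cert : (dY + t) * (t * h + h * t) - (t * h + h * t) * (dY + t)
        - (t * (i ∘ₗ p) - (i ∘ₗ p) * t)
        = (dY * t + t * dY + t * t) * h - h * (dY * t + t * dY + t * t)
          + (dY * h + h * dY - (1 - i ∘ₗ p)) * t - t * (dY * h + h * dY - (1 - i ∘ₗ p)) := by
      noncomm_ring
    rw [z4, z5] at cert
    simp only [zero_mul, mul_zero, sub_self, add_zero, zero_add, sub_zero, zero_sub, neg_zero] at cert
    exact sub_eq_zero.mp cert
  -- commutator of `S` with `DY`
  have commS : S * (dY + t) - (dY + t) * S - S * (t * (i ∘ₗ p) - (i ∘ₗ p) * t) * S = 0 := by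
    have c0 : (dY + t) * (t * h + h * t) - (t * h + h * t) * (dY + t)
        - (t * (i ∘ₗ p) - (i ∘ₗ p) * t) = 0 := sub_eq_zero.mpr commC
    have m1 : S * (1 + (t * h + h * t)) - 1 = 0 := sub_eq_zero.mpr mS1
    have m2 : (1 + (t * h + h * t)) * S - 1 = 0 := sub_eq_zero.mpr mS2
    have cert : S * (dY + t) - (dY + t) * S - S * (t * (i ∘ₗ p) - (i ∘ₗ p) * t) * S
        = (S * (1 + (t * h + h * t)) - 1) * ((dY + t) * S)
          + S * ((dY + t) * (t * h + h * t) - (t * h + h * t) * (dY + t)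
              - (t * (i ∘ₗ p) - (i ∘ₗ p) * t)) * S
          - (S * (dY + t)) * ((1 + (t * h + h * t)) * S - 1) := by
      noncomm_ring
    rw [c0, m1, m2] at cert
    simpa using cert
  -- the key homotopy identity
  have HK : (dY + t) * (h * S) + (h * S) * (dY + t)
      = 1 - i ∘ₗ p + (h * S) * (t * (i ∘ₗ p) - (i ∘ₗ p) * t) := by
    have z50 : dY * h + h * dY - (1 - i ∘ₗ p) = 0 := sub_eq_zero.mpr z5
    have m2 : (1 + (t * h + h * t)) * S - 1 = 0 := sub_eq_zero.mpr mS2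
    have cert : (dY + t) * (h * S) + (h * S) * (dY + t)
        - (1 - (i ∘ₗ p) * S + (h * S) * ((t * (i ∘ₗ p) - (i ∘ₗ p) * t) * S))
        = h * (S * (dY + t) - (dY + t) * S - S * (t * (i ∘ₗ p) - (i ∘ₗ p) * t) * S)
          + (dY * h + h * dY - (1 - i ∘ₗ p)) * S
          + ((1 + (t * h + h * t)) * S - 1) := by
      noncomm_ring
    rw [commS, z50, m2] at cert
    simp only [mul_zero, zero_mul, add_zero, zero_add] at cert
    have e := sub_eq_zero.mp cert
    rw [BS, ipS] at e
    exact e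
  -- `DY ∘ H` solved form
  have mDH : (dY + t) * (h * S)
      = 1 - i ∘ₗ p + (h * S) * (t * (i ∘ₗ p) - (i ∘ₗ p) * t) - (h * S) * (dY + t) := by
    rw [eq_sub_iff_add_eq]; exact HK
  have mDHc : (dY + t) ∘ₗ (h ∘ₗ S)
      = 1 - i ∘ₗ p + (h ∘ₗ S) ∘ₗ (t * (i ∘ₗ p) - (i ∘ₗ p) * t) - (h ∘ₗ S) ∘ₗ (dY + t) := mDH
  -- conjunct 5 : `p ∘ H = 0`
  have G5 : p ∘ₗ (h ∘ₗ S) = 0 := by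
    ext y; simp [hsc3']
  -- conjunct 1 : `p ∘ I = id`
  have G1 : p ∘ₗ (i - (h ∘ₗ S) ∘ₗ (t ∘ₗ i - i ∘ₗ (p ∘ₗ t ∘ₗ i))) = LinearMap.id := by
    ext x; simp [hpi', hsc3']
  -- conjunct 3 : `DX ∘ p = p ∘ DY`
  have G3 : (dX + p ∘ₗ t ∘ₗ i) ∘ₗ p = p ∘ₗ (dY + t) := by
    rw [LinearMap.add_comp, LinearMap.comp_add, hpchain, hcomm]
  -- conjunct 4 : homotopy relation
  have Ip : (i - (h ∘ₗ S) ∘ₗ (t ∘ₗ i - i ∘ₗ (p ∘ₗ t ∘ₗ i))) ∘ₗ p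
      = i ∘ₗ p - (h ∘ₗ S) ∘ₗ (t * (i ∘ₗ p) - (i ∘ₗ p) * t) := by
    rw [LinearMap.sub_comp, LinearMap.comp_assoc, Ap]
  have G4 : (dY + t) ∘ₗ (h ∘ₗ S) + (h ∘ₗ S) ∘ₗ (dY + t)
      = LinearMap.id - (i - (h ∘ₗ S) ∘ₗ (t ∘ₗ i - i ∘ₗ (p ∘ₗ t ∘ₗ i))) ∘ₗ p := by
    rw [Ip]
    have e : (dY + t) * (h * S) + (h * S) * (dY + t)
        = 1 - (i ∘ₗ p - (h * S) * (t * (i ∘ₗ p) - (i ∘ₗ p) * t)) := by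
      rw [HK]; abel
    exact e
  -- conjunct 2 : `DY ∘ I = I ∘ DX`
  have hdiffA : (dY + t) ∘ₗ i - i ∘ₗ (dX + p ∘ₗ t ∘ₗ i) = t ∘ₗ i - i ∘ₗ (p ∘ₗ t ∘ₗ i) := by
    have c : (dY + t) ∘ₗ i - i ∘ₗ (dX + p ∘ₗ t ∘ₗ i) - (t ∘ₗ i - i ∘ₗ (p ∘ₗ t ∘ₗ i))
        = dY ∘ₗ i - i ∘ₗ dX := by
      simp only [LinearMap.add_comp, LinearMap.comp_add, LinearMap.sub_comp, LinearMap.comp_sub,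
        LinearMap.comp_assoc]
      abel
    rw [hichain] at c
    simp only [sub_self] at c
    exact sub_eq_zero.mp c
  have hDA : (dY + t) ∘ₗ (t ∘ₗ i - i ∘ₗ (p ∘ₗ t ∘ₗ i))
      + (t ∘ₗ i - i ∘ₗ (p ∘ₗ t ∘ₗ i)) ∘ₗ (dX + p ∘ₗ t ∘ₗ i) = 0 := by
    have z4c : dY ∘ₗ t + t ∘ₗ dY + t ∘ₗ t = 0 := z4
    have z4Xc : dX ∘ₗ (p ∘ₗ t ∘ₗ i) + (p ∘ₗ t ∘ₗ i) ∘ₗ dX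
        + (p ∘ₗ t ∘ₗ i) ∘ₗ (p ∘ₗ t ∘ₗ i) = 0 := z4X
    have cert : (dY + t) ∘ₗ (t ∘ₗ i - i ∘ₗ (p ∘ₗ t ∘ₗ i))
        + (t ∘ₗ i - i ∘ₗ (p ∘ₗ t ∘ₗ i)) ∘ₗ (dX + p ∘ₗ t ∘ₗ i)
        = (dY ∘ₗ t + t ∘ₗ dY + t ∘ₗ t) ∘ₗ i - (dY ∘ₗ i - i ∘ₗ dX) ∘ₗ (p ∘ₗ t ∘ₗ i)
          - t ∘ₗ (dY ∘ₗ i - i ∘ₗ dX)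
          - i ∘ₗ (dX ∘ₗ (p ∘ₗ t ∘ₗ i) + (p ∘ₗ t ∘ₗ i) ∘ₗ dX
              + (p ∘ₗ t ∘ₗ i) ∘ₗ (p ∘ₗ t ∘ₗ i)) := by
      simp only [LinearMap.add_comp, LinearMap.comp_add, LinearMap.sub_comp, LinearMap.comp_sub,
        LinearMap.comp_assoc]
      abel
    rw [cert, z4c, z4Xc, hichain]
    simp
  have w1 : (t * (i ∘ₗ p) - (i ∘ₗ p) * t) ∘ₗ (t ∘ₗ i - i ∘ₗ (p ∘ₗ t ∘ₗ i)) = 0 := by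
    rw [← Ap, LinearMap.comp_assoc, pA, LinearMap.comp_zero]
  have G2 : (dY + t) ∘ₗ (i - (h ∘ₗ S) ∘ₗ (t ∘ₗ i - i ∘ₗ (p ∘ₗ t ∘ₗ i)))
      = (i - (h ∘ₗ S) ∘ₗ (t ∘ₗ i - i ∘ₗ (p ∘ₗ t ∘ₗ i))) ∘ₗ (dX + p ∘ₗ t ∘ₗ i) := by
    rw [← sub_eq_zero]
    have c1 : (dY + t) ∘ₗ (i - (h ∘ₗ S) ∘ₗ (t ∘ₗ i - i ∘ₗ (p ∘ₗ t ∘ₗ i)))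
        - (i - (h ∘ₗ S) ∘ₗ (t ∘ₗ i - i ∘ₗ (p ∘ₗ t ∘ₗ i))) ∘ₗ (dX + p ∘ₗ t ∘ₗ i)
        = ((dY + t) ∘ₗ i - i ∘ₗ (dX + p ∘ₗ t ∘ₗ i))
          - ((dY + t) ∘ₗ (h ∘ₗ S)) ∘ₗ (t ∘ₗ i - i ∘ₗ (p ∘ₗ t ∘ₗ i))
          + (h ∘ₗ S) ∘ₗ ((t ∘ₗ i - i ∘ₗ (p ∘ₗ t ∘ₗ i)) ∘ₗ (dX + p ∘ₗ t ∘ₗ i)) := by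
      simp only [LinearMap.add_comp, LinearMap.comp_add, LinearMap.sub_comp, LinearMap.comp_sub,
        LinearMap.comp_assoc]
      abel
    rw [c1, mDHc]
    have c2 : ((dY + t) ∘ₗ i - i ∘ₗ (dX + p ∘ₗ t ∘ₗ i))
        - (1 - i ∘ₗ p + (h ∘ₗ S) ∘ₗ (t * (i ∘ₗ p) - (i ∘ₗ p) * t) - (h ∘ₗ S) ∘ₗ (dY + t))
            ∘ₗ (t ∘ₗ i - i ∘ₗ (p ∘ₗ t ∘ₗ i))
        + (h ∘ₗ S) ∘ₗ ((t ∘ₗ i - i ∘ₗ (p ∘ₗ t ∘ₗ i)) ∘ₗ (dX + p ∘ₗ t ∘ₗ i))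
        = ((dY + t) ∘ₗ i - i ∘ₗ (dX + p ∘ₗ t ∘ₗ i) - (t ∘ₗ i - i ∘ₗ (p ∘ₗ t ∘ₗ i)))
          + i ∘ₗ (p ∘ₗ (t ∘ₗ i - i ∘ₗ (p ∘ₗ t ∘ₗ i)))
          - (h ∘ₗ S) ∘ₗ ((t * (i ∘ₗ p) - (i ∘ₗ p) * t) ∘ₗ (t ∘ₗ i - i ∘ₗ (p ∘ₗ t ∘ₗ i)))
          + (h ∘ₗ S) ∘ₗ ((dY + t) ∘ₗ (t ∘ₗ i - i ∘ₗ (p ∘ₗ t ∘ₗ i))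
              + (t ∘ₗ i - i ∘ₗ (p ∘ₗ t ∘ₗ i)) ∘ₗ (dX + p ∘ₗ t ∘ₗ i)) := by
      simp only [Module.End.mul_eq_comp, Module.End.one_eq_id, LinearMap.add_comp,
        LinearMap.comp_add, LinearMap.sub_comp, LinearMap.comp_sub, LinearMap.id_comp,
        LinearMap.comp_assoc]
      abel
    rw [c2, hdiffA, pA, w1, hDA]
    simp
  -- conjunct 6 : side conditions
  have G6 : h ∘ₗ h = 0 → h ∘ₗ i = 0 →
      ((h ∘ₗ S) ∘ₗ (h ∘ₗ S) = 0 ∧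
        (h ∘ₗ S) ∘ₗ (i - (h ∘ₗ S) ∘ₗ (t ∘ₗ i - i ∘ₗ (p ∘ₗ t ∘ₗ i))) = 0) := by
    intro hhh hhi
    have mhh : h * h = 0 := hhh
    have hTh : h * (t * h + h * t) - (t * h + h * t) * h = 0 := by
      have cert : h * (t * h + h * t) - (t * h + h * t) * h = (h * h) * t - t * (h * h) := by
        noncomm_ring
      rw [cert, mhh]
      simp
    have m1 : S * (1 + (t * h + h * t)) - 1 = 0 := sub_eq_zero.mpr mS1
    have m2 : 1 - (1 + (t * h + h * t)) * S = 0 := by rw [mS2]; simp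
    have Sh : S * h = h * S := by
      have cert : S * h - h * S
          = S * (h * (t * h + h * t) - (t * h + h * t) * h) * S
            + (S * h) * (1 - (1 + (t * h + h * t)) * S)
            + (S * (1 + (t * h + h * t)) - 1) * (h * S) := by
        noncomm_ring
      rw [hTh, m1, m2] at cert
      simp only [mul_zero, zero_mul, add_zero, zero_add] at cert
      exact sub_eq_zero.mp cert
    have HH : (h ∘ₗ S) ∘ₗ (h ∘ₗ S) = 0 := by
      have e : (h * S) * (h * S) = 0 := by
        calc (h * S) * (h * S) = h * (S * h) * S := by noncomm_ring
        _ = h * (h * S) * S := by rw [Sh]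
        _ = (h * h) * (S * S) := by noncomm_ring
        _ = 0 := by rw [mhh]; simp
      exact e
    have hSi : (h ∘ₗ S) ∘ₗ i = 0 := by
      have e : h ∘ₗ S = S ∘ₗ h := Sh.symm
      rw [e, LinearMap.comp_assoc, hhi, LinearMap.comp_zero]
    refine ⟨HH, ?_⟩
    rw [LinearMap.comp_sub, hSi, ← LinearMap.comp_assoc, HH, LinearMap.zero_comp, sub_zero]
  intro tX DX DY H I
  exact ⟨G1, G2, G3, G4, G5, G6⟩
end

section
/- Second perturbation lemma: With a contraction (i,p,h_Y) from (X,d_X) to (Y,d_Y) satisfying the side condition h_Y∘i = 0, and a perturbation D_Y = d_Y + t_Y with t_Y∘i = i∘t_X (where D_X = d_X + t_X, D_X² = 0) and t_Y h_Y + h_Y t_Y filtration-raising, the maps P := p(id + t_Y h_Y + h_Y t_Y)^{-1} and H'_Y := h_Y(id + t_Y h_Y + h_Y t_Y)^{-1} give a contraction (i, P, H'_Y) from (X,D_X) to (Y,D_Y) with H'_Y∘i = 0. -/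
/-!
Write `D = dY + t`, `A = id + (t h + h t)` and `S = A⁻¹`. Since `D² = 0`, `D` commutes with
`D h + h D = A - i p`, so `[D, A] = [D, i p]`, and conjugating by `S` gives
`S D - D S = S (D i p - i p D) S`. The side condition `h i = 0` together with `t i = i tX` makes
`A i = i`, hence `S i = i`, so this commutator factors as `i (DX p - p D) S`. Composing with `p`
(`p i = id`) shows that `P = p S` is a chain map, composing with `h` (`h i = 0`) shows
`h S D = h D S`, and then `D H' + H' D = (D h + h D) S = (A - i p) S = id - i P`.
-/

namespace HomologicalPerturbation

open LinearMap

section Semiring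

variable {R M N : Type*} [Semiring R] [AddCommMonoid M] [Module R M] [AddCommMonoid N]
  [Module R N]

lemma initiator_comp_eq_zero {h t : N →ₗ[R] N} {i : M →ₗ[R] N} {tX : M →ₗ[R] M}
    (hhi : h ∘ₗ i = 0) (hti : t ∘ₗ i = i ∘ₗ tX) : (t ∘ₗ h + h ∘ₗ t) ∘ₗ i = 0 := by
  rw [add_comp, comp_assoc, comp_assoc, hhi, hti, ← comp_assoc, hhi, comp_zero, zero_comp,
    add_zero]

lemma comp_eq_self_of_comp_eq_zero {S T : N →ₗ[R] N} {i : M →ₗ[R] N}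
    (hS : S ∘ₗ (LinearMap.id + T) = LinearMap.id) (hT : T ∘ₗ i = 0) : S ∘ₗ i = i :=
  calc S ∘ₗ i = S ∘ₗ ((LinearMap.id + T) ∘ₗ i) := by rw [add_comp, hT, id_comp, add_zero]
    _ = i := by rw [← comp_assoc, hS, id_comp]

lemma comp_homotopy_comm_of_comp_self_eq_zero {D h : N →ₗ[R] N} (hD : D ∘ₗ D = 0) :
    D ∘ₗ (D ∘ₗ h + h ∘ₗ D) = (D ∘ₗ h + h ∘ₗ D) ∘ₗ D := by
  simp only [comp_add, add_comp, comp_assoc, hD, comp_zero]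
  simp only [← comp_assoc, hD, zero_comp, zero_add, add_zero]

lemma id_add_initiator_comm_of_comp_self_eq_zero {h t : N →ₗ[R] N} (hh : h ∘ₗ h = 0) :
    h ∘ₗ (LinearMap.id + (t ∘ₗ h + h ∘ₗ t)) = (LinearMap.id + (t ∘ₗ h + h ∘ₗ t)) ∘ₗ h := by
  simp only [comp_add, add_comp, comp_id, id_comp, comp_assoc, hh, comp_zero]
  simp only [← comp_assoc, hh, zero_comp, zero_add, add_zero]

lemma comp_inverse_comm {S A h : N →ₗ[R] N} (hSA : S ∘ₗ A = LinearMap.id)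
    (hAS : A ∘ₗ S = LinearMap.id) (hhA : h ∘ₗ A = A ∘ₗ h) : h ∘ₗ S = S ∘ₗ h :=
  calc h ∘ₗ S = S ∘ₗ (A ∘ₗ h) ∘ₗ S := by rw [← comp_assoc, ← comp_assoc, hSA, id_comp]
    _ = S ∘ₗ h := by simp only [← hhA, comp_assoc, hAS, comp_id]

lemma comp_comp_comp_eq_zero_of_comm {f : N →ₗ[R] M} {S h : N →ₗ[R] N} (hfh : f ∘ₗ h = 0)
    (hhS : h ∘ₗ S = S ∘ₗ h) : (f ∘ₗ S) ∘ₗ (h ∘ₗ S) = 0 := by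
  rw [comp_assoc, ← comp_assoc S h, ← hhS]
  simp only [← comp_assoc, hfh, zero_comp]

end Semiring

section Ring

variable {R M N : Type*} [Ring R] [AddCommGroup M] [Module R M] [AddCommGroup N] [Module R N]

lemma perturbed_homotopy_eq {d h t : N →ₗ[R] N} {i : M →ₗ[R] N} {p : N →ₗ[R] M}
    (hhom : d ∘ₗ h + h ∘ₗ d = LinearMap.id - i ∘ₗ p) :
    (d + t) ∘ₗ h + h ∘ₗ (d + t) = (LinearMap.id + (t ∘ₗ h + h ∘ₗ t)) - i ∘ₗ p := by
  rw [add_comp, comp_add, add_add_add_comm, hhom]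
  abel

lemma inverse_comp_sub_comp_inverse {S A D : N →ₗ[R] N} (hSA : S ∘ₗ A = LinearMap.id)
    (hAS : A ∘ₗ S = LinearMap.id) : S ∘ₗ D - D ∘ₗ S = S ∘ₗ (D ∘ₗ A - A ∘ₗ D) ∘ₗ S := by
  rw [sub_comp, comp_sub, comp_assoc, hAS, comp_id, ← comp_assoc, ← comp_assoc, hSA, id_comp]

lemma inverse_comp_sub_comp_inverse_eq_incl_comp {S A D : N →ₗ[R] N} {i : M →ₗ[R] N}
    {p : N →ₗ[R] M} {DX : M →ₗ[R] M} (hSA : S ∘ₗ A = LinearMap.id)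
    (hAS : A ∘ₗ S = LinearMap.id) (hSi : S ∘ₗ i = i) (hDi : D ∘ₗ i = i ∘ₗ DX)
    (hDA : D ∘ₗ (A - i ∘ₗ p) = (A - i ∘ₗ p) ∘ₗ D) :
    S ∘ₗ D - D ∘ₗ S = i ∘ₗ (DX ∘ₗ p - p ∘ₗ D) ∘ₗ S := by
  have hcomm : D ∘ₗ A - A ∘ₗ D = i ∘ₗ (DX ∘ₗ p - p ∘ₗ D) := by
    rw [comp_sub, sub_comp, sub_eq_sub_iff_sub_eq_sub] at hDA
    rw [hDA, comp_sub, ← comp_assoc, hDi, comp_assoc, comp_assoc]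
  rw [inverse_comp_sub_comp_inverse hSA hAS, hcomm]
  simp only [← comp_assoc, hSi]

variable {S D : N →ₗ[R] N} {i : M →ₗ[R] N} {p : N →ₗ[R] M} {DX : M →ₗ[R] M}

lemma comp_inverse_comp_eq_of_comp_incl_eq_id (hpi : p ∘ₗ i = LinearMap.id)
    (hE : S ∘ₗ D - D ∘ₗ S = i ∘ₗ (DX ∘ₗ p - p ∘ₗ D) ∘ₗ S) :
    DX ∘ₗ (p ∘ₗ S) = (p ∘ₗ S) ∘ₗ D := by
  have hpE := congrArg (p ∘ₗ ·) hE
  simp only [comp_sub, sub_comp, ← comp_assoc, hpi, id_comp] at hpE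
  exact (sub_left_inj.mp hpE).symm

lemma comp_inverse_comp_eq_of_comp_incl_eq_zero {h : N →ₗ[R] N} (hhi : h ∘ₗ i = 0)
    (hE : S ∘ₗ D - D ∘ₗ S = i ∘ₗ (DX ∘ₗ p - p ∘ₗ D) ∘ₗ S) :
    h ∘ₗ S ∘ₗ D = h ∘ₗ D ∘ₗ S := by
  have hhE := congrArg (h ∘ₗ ·) hE
  simp only [comp_sub, ← comp_assoc, hhi, zero_comp, sub_self, sub_eq_zero] at hhE
  simpa only [comp_assoc] using hhE

lemma homotopy_comp_inverse {A h : N →ₗ[R] N} (hAS : A ∘ₗ S = LinearMap.id)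
    (hhom : D ∘ₗ h + h ∘ₗ D = A - i ∘ₗ p) (hhS : h ∘ₗ S ∘ₗ D = h ∘ₗ D ∘ₗ S) :
    D ∘ₗ (h ∘ₗ S) + (h ∘ₗ S) ∘ₗ D = LinearMap.id - i ∘ₗ (p ∘ₗ S) := by
  rw [comp_assoc, hhS, ← comp_assoc, ← comp_assoc, ← add_comp, hhom, sub_comp, hAS, comp_assoc]

end Ring

end HomologicalPerturbation

open HomologicalPerturbation LinearMap in
theorem perturbation_lemma_two_general
    (K : Type*) [Field K]
    (X Y : Type*) [AddCommGroup X] [Module K X] [AddCommGroup Y] [Module K Y]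
    (dX : X →ₗ[K] X) (dY : Y →ₗ[K] Y)
    (i : X →ₗ[K] Y) (p : Y →ₗ[K] X) (h : Y →ₗ[K] Y)
    (t : Y →ₗ[K] Y) (tX : X →ₗ[K] X)
    -- … so that `id + t h + h t` is invertible, with inverse `S`
    (S : Y →ₗ[K] Y)
    (hS1 : S ∘ₗ (LinearMap.id + (t ∘ₗ h + h ∘ₗ t)) = LinearMap.id)
    (hS2 : (LinearMap.id + (t ∘ₗ h + h ∘ₗ t)) ∘ₗ S = LinearMap.id)
    -- complexes and contraction data
    (hichain : dY ∘ₗ i = i ∘ₗ dX)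
    (hpi : p ∘ₗ i = LinearMap.id)
    (hhom : dY ∘ₗ h + h ∘ₗ dY = LinearMap.id - i ∘ₗ p)
    -- side condition (sc2)
    (hsc2 : h ∘ₗ i = 0)
    -- the perturbation
    (hDY2 : (dY + t) ∘ₗ (dY + t) = 0)
    (hcomm : t ∘ₗ i = i ∘ₗ tX) :
    (let DX : X →ₗ[K] X := dX + tX
     let DY : Y →ₗ[K] Y := dY + t
     let P : Y →ₗ[K] X := p ∘ₗ S
     let H' : Y →ₗ[K] Y := h ∘ₗ S
     -- `(i, P, H')` is a contraction from `(X, DX)` to `(Y, DY)` …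
     P ∘ₗ i = LinearMap.id ∧
     DY ∘ₗ i = i ∘ₗ DX ∧
     DX ∘ₗ P = P ∘ₗ DY ∧
     DY ∘ₗ H' + H' ∘ₗ DY = LinearMap.id - i ∘ₗ P ∧
     -- … with the side condition (sc2)
     H' ∘ₗ i = 0 ∧
     -- and if all side conditions hold for `(i, p, h)` they hold for `(i, P, H')`
     (h ∘ₗ h = 0 → p ∘ₗ h = 0 → (H' ∘ₗ H' = 0 ∧ P ∘ₗ H' = 0))) := by
  intro DX DY P H'
  have hSi : S ∘ₗ i = i := comp_eq_self_of_comp_eq_zero hS1 (initiator_comp_eq_zero hsc2 hcomm)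
  have hDYi : DY ∘ₗ i = i ∘ₗ DX := by rw [add_comp, comp_add, hichain, hcomm]
  have hhomD := perturbed_homotopy_eq (t := t) hhom
  have hE : S ∘ₗ DY - DY ∘ₗ S = i ∘ₗ (DX ∘ₗ p - p ∘ₗ DY) ∘ₗ S :=
    inverse_comp_sub_comp_inverse_eq_incl_comp hS1 hS2 hSi hDYi
      (hhomD ▸ comp_homotopy_comm_of_comp_self_eq_zero hDY2)
  refine ⟨by rw [comp_assoc, hSi, hpi], hDYi, comp_inverse_comp_eq_of_comp_incl_eq_id hpi hE,
    homotopy_comp_inverse hS2 hhomD (comp_inverse_comp_eq_of_comp_incl_eq_zero hsc2 hE),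
    by rw [comp_assoc, hSi, hsc2], fun hh hph => ?_⟩
  have hhS : h ∘ₗ S = S ∘ₗ h :=
    comp_inverse_comm hS1 hS2 (id_add_initiator_comm_of_comp_self_eq_zero hh)
  exact ⟨comp_comp_comp_eq_zero_of_comm hh hhS, comp_comp_comp_eq_zero_of_comm hph hhS⟩

/-- **Second perturbation lemma.**
Given a contraction `(i, p, h)` of filtered complexes `(X, dX)` and `(Y, dY)` with the
side condition `h ∘ i = 0`, and a perturbation `DY = dY + t` of `dY` with `t ∘ i = i ∘ tX`
(where `DX = dX + tX` squares to zero) such that `T := t h + h t` raises the filtration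
degree (so that `id + T` is invertible, with inverse `S`), the maps `P := p ∘ S` and
`H' := h ∘ S` give a contraction `(i, P, H')` from `(X, DX)` to `(Y, DY)` with
`H' ∘ i = 0`; moreover if all side conditions hold for `(i, p, h)` they hold for
`(i, P, H')`. -/
theorem perturbation_lemma_two
    (K : Type*) [Field K]
    (X Y : Type*) [AddCommGroup X] [Module K X] [AddCommGroup Y] [Module K Y]
    (dX : X →ₗ[K] X) (dY : Y →ₗ[K] Y)
    (i : X →ₗ[K] Y) (p : Y →ₗ[K] X) (h : Y →ₗ[K] Y)
    (t : Y →ₗ[K] Y) (tX : X →ₗ[K] X)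
    -- descending Hausdorff filtration, preserved by the structure maps
    (F : ℕ → Submodule K Y)
    (hFdesc : ∀ k, F (k + 1) ≤ F k)
    (hFhaus : (⨅ k, F k) = ⊥)
    (hFd : ∀ k, ∀ y ∈ F k, dY y ∈ F k)
    (hFh : ∀ k, ∀ y ∈ F k, h y ∈ F k)
    (hFt : ∀ k, ∀ y ∈ F k, t y ∈ F k)
    -- the initiator raises the filtration …
    (hraise : ∀ k, ∀ y ∈ F k, (t ∘ₗ h + h ∘ₗ t) y ∈ F (k + 1))
    -- … so that `id + t h + h t` is invertible, with inverse `S`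
    (S : Y →ₗ[K] Y)
    (hS1 : S ∘ₗ (LinearMap.id + (t ∘ₗ h + h ∘ₗ t)) = LinearMap.id)
    (hS2 : (LinearMap.id + (t ∘ₗ h + h ∘ₗ t)) ∘ₗ S = LinearMap.id)
    -- complexes and contraction data
    (hdX2 : dX ∘ₗ dX = 0) (hdY2 : dY ∘ₗ dY = 0)
    (hichain : dY ∘ₗ i = i ∘ₗ dX)
    (hpchain : dX ∘ₗ p = p ∘ₗ dY)
    (hpi : p ∘ₗ i = LinearMap.id)
    (hhom : dY ∘ₗ h + h ∘ₗ dY = LinearMap.id - i ∘ₗ p)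
    -- side condition (sc2)
    (hsc2 : h ∘ₗ i = 0)
    -- the perturbation
    (hDY2 : (dY + t) ∘ₗ (dY + t) = 0)
    (hDX2 : (dX + tX) ∘ₗ (dX + tX) = 0)
    (hcomm : t ∘ₗ i = i ∘ₗ tX) :
    (let DX : X →ₗ[K] X := dX + tX
     let DY : Y →ₗ[K] Y := dY + t
     let P : Y →ₗ[K] X := p ∘ₗ S
     let H' : Y →ₗ[K] Y := h ∘ₗ S
     -- `(i, P, H')` is a contraction from `(X, DX)` to `(Y, DY)` …
     P ∘ₗ i = LinearMap.id ∧
     DY ∘ₗ i = i ∘ₗ DX ∧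
     DX ∘ₗ P = P ∘ₗ DY ∧
     DY ∘ₗ H' + H' ∘ₗ DY = LinearMap.id - i ∘ₗ P ∧
     -- … with the side condition (sc2)
     H' ∘ₗ i = 0 ∧
     -- and if all side conditions hold for `(i, p, h)` they hold for `(i, P, H')`
     (h ∘ₗ h = 0 → p ∘ₗ h = 0 → (H' ∘ₗ H' = 0 ∧ P ∘ₗ H' = 0))) :=
  perturbation_lemma_two_general K X Y dX dY i p h t tX S hS1 hS2 hichain hpi hhom hsc2 hDY2 hcomm
end

section
/- Let A be a commutative ring, J₁,…,J_ℓ ∈ A, and I = (J₁,…,J_ℓ). If the Koszul complex K(A; J₁,…,J_ℓ) is a resolution of A/I (i.e. acyclic in positive degrees with H₀ = A/I), then the images [J₁],…,[J_ℓ] form a free basis of the A/I-module I/I²; that is, whenever f₁,…,f_ℓ ∈ A satisfy Σ_a f_a J_a ∈ I², all f_a lie in I, and the [J_a] generate I/I². -/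
/-!
Write an element `∑ f_a J_a` of `I²` as `∑ c_a J_a` with all `c_a ∈ I`. Then
`∑ (f_a - c_a) J_a = 0`, i.e. `f - c` is a Koszul 1-cycle, so by exactness in degree one it is
a boundary: `f_a - c_a = ∑_b J_b G(b, a) ∈ I`. Hence `f_a ∈ I`.
-/

open scoped BigOperators

/-- Coordinate description of the degree-`k` part of the Koszul complex on `ℓ`
generators: an alternating `A`-valued tensor in `k` indices from `Fin ℓ`. -/
def IsAltTensor {A : Type*} [CommRing A] (ℓ k : ℕ)
    (F : (Fin k → Fin ℓ) → A) : Prop :=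
  (∀ v : Fin k → Fin ℓ, ¬ Function.Injective v → F v = 0) ∧
  (∀ (v : Fin k → Fin ℓ) (σ : Equiv.Perm (Fin k)),
    F (v ∘ σ) = (Equiv.Perm.sign σ : ℤ) • F v)

theorem Ideal.exists_coeffs_mem_of_mem_span_range_sq {A ι : Type*} [CommRing A] [Fintype ι]
    {J : ι → A} {x : A} (hx : x ∈ Ideal.span (Set.range J) ^ 2) :
    ∃ c : ι → A, (∀ a, c a ∈ Ideal.span (Set.range J)) ∧ x = ∑ a, c a * J a := by
  rw [sq, ← Ideal.smul_eq_mul, Submodule.mem_ideal_smul_span_iff_exists_sum] at hx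
  obtain ⟨c, hc, rfl⟩ := hx
  exact ⟨c, hc, by simp [Finsupp.sum_fintype]⟩

theorem isAltTensor_one {A : Type*} [CommRing A] (ℓ : ℕ) (F : (Fin 1 → Fin ℓ) → A) :
    IsAltTensor ℓ 1 F :=
  ⟨fun _ hv => absurd (fun i j _ => Subsingleton.elim i j) hv,
    fun _ σ => by simp [Subsingleton.elim σ 1]⟩

theorem mem_span_of_sum_mul_eq_zero {A : Type*} [CommRing A] {ℓ : ℕ} {J : Fin ℓ → A}
    (hexact : ∀ F : (Fin 1 → Fin ℓ) → A, IsAltTensor ℓ 1 F →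
      (∀ v : Fin 0 → Fin ℓ, ∑ b, J b * F (Fin.cons b v) = 0) →
      ∃ G : (Fin 2 → Fin ℓ) → A, IsAltTensor ℓ 2 G ∧
        ∀ v : Fin 1 → Fin ℓ, F v = ∑ b, J b * G (Fin.cons b v))
    {g : Fin ℓ → A} (hg : ∑ a, g a * J a = 0) (a : Fin ℓ) :
    g a ∈ Ideal.span (Set.range J) := by
  let F : (Fin 1 → Fin ℓ) → A := fun v => g (v 0)
  have hcycle : ∀ v : Fin 0 → Fin ℓ, ∑ b, J b * F (Fin.cons b v) = 0 := fun _ => by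
    simpa [F, mul_comm] using hg
  obtain ⟨G, -, hG⟩ := hexact F (isAltTensor_one ℓ F) hcycle
  have hboundary : g a = ∑ b, J b * G (Fin.cons b fun _ => a) := hG fun _ => a
  rw [hboundary]
  exact Ideal.sum_mem _ fun b _ => Ideal.mul_mem_right _ _ (Ideal.subset_span ⟨b, rfl⟩)

/-- **Freeness of the conormal module for a Koszul-regular sequence.**
Let `A` be a commutative ring, `J₁, …, J_ℓ ∈ A` and `I = (J₁, …, J_ℓ)`.  If the Koszul
complex `K(A; J₁, …, J_ℓ)` is a resolution of `A/I`, i.e. is acyclic in positive degrees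
(every alternating cycle for the Koszul differential `∂(e_b) = J_b` is a boundary of an
alternating tensor; `H₀ = A/I` holds automatically), then the images `[J₁], …, [J_ℓ]`
form a free basis of the `A/I`-module `I/I²`: whenever `f₁, …, f_ℓ ∈ A` satisfy
`∑ f_a J_a ∈ I²` then all `f_a ∈ I`, and every element of `I` is an `A`-linear
combination of the `J_a` (so the `[J_a]` generate `I/I²`). -/
theorem koszul_resolution_conormal_free
    (A : Type*) [CommRing A] (ℓ : ℕ) (J : Fin ℓ → A)
    (I : Ideal A) (hI : I = Ideal.span (Set.range J))
    -- acyclicity of the Koszul complex in positive degrees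
    (hacyclic : ∀ (k : ℕ) (F : (Fin (k + 1) → Fin ℓ) → A), IsAltTensor ℓ (k + 1) F →
      (∀ v : Fin k → Fin ℓ, ∑ b, J b * F (Fin.cons b v) = 0) →
      ∃ G : (Fin (k + 2) → Fin ℓ) → A, IsAltTensor ℓ (k + 2) G ∧
        ∀ v : Fin (k + 1) → Fin ℓ, F v = ∑ b, J b * G (Fin.cons b v)) :
    -- freeness: `∑ f_a J_a ∈ I²` forces all `f_a ∈ I`
    (∀ f : Fin ℓ → A, (∑ a, f a * J a) ∈ I ^ 2 → ∀ a, f a ∈ I)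
    ∧
    -- generation: the classes `[J_a]` generate `I/I²`
    (∀ x ∈ I, ∃ g : Fin ℓ → A, x = ∑ a, g a * J a) := by
  subst hI
  refine ⟨fun f hf a => ?_, fun x hx => ?_⟩
  · obtain ⟨c, hcI, hc⟩ := Ideal.exists_coeffs_mem_of_mem_span_range_sq hf
    have hrel : ∑ b, (f b - c b) * J b = 0 := by
      simp only [sub_mul, Finset.sum_sub_distrib, hc, sub_self]
    simpa using Ideal.add_mem _ (mem_span_of_sum_mul_eq_zero (hacyclic 0) hrel a) (hcI a)
  · obtain ⟨g, rfl⟩ := Ideal.mem_span_range_iff_exists_fun.mp hx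
    exact ⟨g, rfl⟩
end

section
/- Square-zero of the quantum BRST charge: Let (C^∞(M)[[ν]], ⋆) be a star product and 𝐉 : g → C^∞(M)[[ν]] a quantum moment map, i.e. 𝐉_a ⋆ 𝐉_b − 𝐉_b ⋆ 𝐉_a = ν Σ_c f_{ab}^c 𝐉_c. On the graded associative algebra A[[ν]] ⊗ Cl, where Cl is the (antistandard-ordered) Clifford algebra on g ⊕ g* with relations ξ_a · ξ^b + ξ^b · ξ_a = 2ν δ_a^b, ξ_a·ξ_b + ξ_b·ξ_a = 0 = ξ^a·ξ^b + ξ^b·ξ^a, the element Θ := -¼ Σ f_{ab}^c ξ^a ξ^b ξ_c + Σ_a 𝐉_a ξ^a + (ν/2) Σ_{a,b} f_{ab}^b ξ^a satisfies Θ * Θ = 0. Hence 𝒟 := ν^{-1} ad_*(Θ) is a square-zero derivation. -/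
open scoped BigOperators

section Aux
variable {K : Type*} [Field K] [CharZero K] {W : Type*} [AddCommGroup W] [Module K W]
variable {ι : Type*} [Fintype ι]

omit [CharZero K] in
lemma brst_smul_cancel (n : ℕ) (hn : (n : K) ≠ 0) (x : W) (h : (n : K) • x = 0) : x = 0 := by
  rcases smul_eq_zero.mp h with h' | h'
  · exact absurd h' hn
  · exact h'

lemma brst_sum_symm_antisymm (c : ι → ι → K) (U : ι → ι → W)
    (hc : ∀ s t, c s t = c t s) (hU : ∀ s t, U s t = -U t s) :
    ∑ s, ∑ t, c s t • U s t = 0 := by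
  have h1 : (∑ s, ∑ t, c s t • U s t) = -∑ s, ∑ t, c s t • U s t := by
    conv_lhs => rw [Finset.sum_comm]
    calc (∑ t, ∑ s, c s t • U s t) = ∑ t, ∑ s, -(c t s • U t s) := by
          refine Finset.sum_congr rfl fun t _ => Finset.sum_congr rfl fun s _ => ?_
          rw [hc s t, hU s t, smul_neg]
      _ = -∑ t, ∑ s, c t s • U t s := by
          simp [Finset.sum_neg_distrib]
  refine brst_smul_cancel (K := K) 2 (by norm_num) _ ?_
  rw [Nat.cast_ofNat, two_smul]
  nth_rewrite 2 [h1]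
  exact add_neg_cancel _

lemma brst_rot3 {V : Type*} [AddCommMonoid V] (F : ι → ι → ι → V) :
    ∑ x, ∑ y, ∑ z, F x y z = ∑ y, ∑ z, ∑ x, F x y z := by
  rw [Finset.sum_comm]
  exact Finset.sum_congr rfl fun y _ => Finset.sum_comm

end Aux

set_option maxHeartbeats 2000000

/-- **Square-zero of the quantum BRST charge (Kostant–Sternberg).**
Let `(C^∞(M)[[ν]], ⋆)` be a star product and `𝐉 : g → C^∞(M)[[ν]]` a quantum moment map,
i.e. `𝐉_a ⋆ 𝐉_b - 𝐉_b ⋆ 𝐉_a = ν ∑_c f_{ab}^c 𝐉_c`.  In the graded associative algebra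
`A[[ν]] ⊗ Cl`, where `Cl` is the antistandard-ordered Clifford algebra on `g ⊕ g*` with
relations `ξ_a ξ^b + ξ^b ξ_a = 2ν δ_a^b` (and all other anticommutators zero), the
element
`Θ := -¼ ∑ f_{ab}^c ξ^a ξ^b ξ_c + ∑_a 𝐉_a ξ^a + (ν/2) ∑_{a,b} f_{ab}^b ξ^a`
satisfies `Θ * Θ = 0`.  Hence `𝒟 := ν⁻¹ ad_*(Θ)` is a square-zero derivation.
(Formalized in any associative `K`-algebra `W` containing elements satisfying the
defining relations of this algebra.) -/
theorem quantum_brst_charge_square_zero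
    (K : Type*) [Field K] [CharZero K]
    (W : Type*) [Ring W] [Algebra K W]
    (ℓ : ℕ) (f : Fin ℓ → Fin ℓ → Fin ℓ → K)
    -- antisymmetry and Jacobi identity of the structure constants
    (hfanti : ∀ a b c, f a b c = - f b a c)
    (hfjac : ∀ a b c d,
      (∑ e, (f a b e * f e c d + f b c e * f e a d + f c a e * f e b d)) = 0)
    -- the trace of `ad` vanishes on commutators
    (htrace : ∀ a c, (∑ e, f a c e * (∑ b, f e b b)) = 0)
    -- the central formal parameter `ν`
    (nu : W) (hnu : ∀ w : W, nu * w = w * nu)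
    -- the quantum moment map
    (J : Fin ℓ → W)
    (hJ : ∀ a b, J a * J b - J b * J a = nu * ∑ c, f a b c • J c)
    -- ghosts and antighosts with the antistandard Clifford relations
    (gh ag : Fin ℓ → W)
    (hghgh : ∀ a b, gh a * gh b = - (gh b * gh a))
    (hagag : ∀ a b, ag a * ag b = - (ag b * ag a))
    (hcliff : ∀ a b, ag a * gh b + gh b * ag a = if a = b then 2 • nu else 0)
    -- the function part commutes with the Clifford part
    (hJgh : ∀ a b, J a * gh b = gh b * J a)
    (hJag : ∀ a b, J a * ag b = ag b * J a) :
    (let Θ : W :=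
      - ((4 : K)⁻¹ • (∑ a, ∑ b, ∑ c, f a b c • (gh a * gh b * ag c)))
      + (∑ a, J a * gh a)
      + (2 : K)⁻¹ • (nu * ∑ a, (∑ b, f a b b) • gh a)
     Θ * Θ = 0) := by
  show (- ((4 : K)⁻¹ • (∑ a, ∑ b, ∑ c, f a b c • (gh a * gh b * ag c)))
      + (∑ a, J a * gh a)
      + (2 : K)⁻¹ • (nu * ∑ a, (∑ b, f a b b) • gh a)) *
    (- ((4 : K)⁻¹ • (∑ a, ∑ b, ∑ c, f a b c • (gh a * gh b * ag c)))
      + (∑ a, J a * gh a)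
      + (2 : K)⁻¹ • (nu * ∑ a, (∑ b, f a b b) • gh a)) = 0
  set T : W := ∑ a, ∑ b, ∑ c, f a b c • (gh a * gh b * ag c) with hTdef
  set M : W := ∑ a, J a * gh a with hMdef
  set S0 : W := ∑ a, (∑ b, f a b b) • gh a with hS0def
  set Q : W := ∑ a, ∑ b, ∑ c, f a b c • (J c * (gh a * gh b)) with hQdef
  -- pointwise helper lemmas
  have hnu' : ∀ w : W, w * nu = nu * w := fun w => (hnu w).symm
  have hgh3 : ∀ x a b, gh x * (gh a * gh b) = gh a * gh b * gh x := by
    intro x a b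
    calc gh x * (gh a * gh b) = (gh x * gh a) * gh b := (mul_assoc _ _ _).symm
      _ = -(gh a * gh x) * gh b := by rw [hghgh x a]
      _ = -(gh a * (gh x * gh b)) := by rw [neg_mul, mul_assoc]
      _ = -(gh a * -(gh b * gh x)) := by rw [hghgh x b]
      _ = gh a * gh b * gh x := by rw [mul_neg, neg_neg, mul_assoc]
  have hp3 : ∀ a b q, gh b * gh q * gh a = gh a * gh b * gh q := by
    intro a b q; rw [← hgh3 a b q, ← mul_assoc]
  have hp3' : ∀ a b q, gh q * gh a * gh b = gh a * gh b * gh q := by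
    intro a b q; rw [hp3 b q a, hp3 a b q]
  have hnu2c : ∀ w : W, w * ((2:K) • nu) = ((2:K) • nu) * w := fun w => by
    rw [mul_smul_comm, smul_mul_assoc, hnu' w]
  have hcliff' : ∀ a b, ag a * gh b + gh b * ag a
      = (if a = b then (2:K) • nu else 0) := by
    intro a b; rw [hcliff a b]
    by_cases h : a = b <;> simp [h, two_smul]
  have hcl : ∀ a b, ag a * gh b = (if a = b then (2:K) • nu else 0) - gh b * ag a :=
    fun a b => eq_sub_of_add_eq (hcliff' a b)
  have hEw : ∀ (a b : Fin ℓ) (w : W),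
      w * (if a = b then (2:K) • nu else 0) = (if a = b then (2:K) • nu else 0) * w := by
    intro a b w; by_cases h : a = b <;> simp [h, hnu2c w]
  have hEmove : ∀ (a b : Fin ℓ) (w v : W),
      w * ((if a = b then (2:K) • nu else 0) * v)
        = (if a = b then (2:K) • nu else 0) * (w * v) := by
    intro a b w v; rw [← mul_assoc, hEw, mul_assoc]
  have hJW : ∀ y a b c, J y * (gh a * gh b * ag c) = (gh a * gh b * ag c) * J y := by
    intro y a b c
    have c1 : Commute (J y) (gh a) := hJgh y a
    have c2 : Commute (J y) (gh b) := hJgh y b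
    have c3 : Commute (J y) (ag c) := hJag y c
    exact ((c1.mul_right c2).mul_right c3).eq
  have hJT : ∀ y, J y * T = T * J y := by
    intro y
    rw [hTdef]
    simp only [Finset.mul_sum, Finset.sum_mul, mul_smul_comm, smul_mul_assoc, hJW]
  -- core lemmas
  have expand2 : ∀ (u v : Fin ℓ → W), (∑ i, u i) * (∑ j, v j) = ∑ i, ∑ j, u i * v j := by
    intro u v
    rw [Finset.sum_mul]
    exact Finset.sum_congr rfl fun i _ => Finset.mul_sum _ _ _
  have hSS : S0 * S0 = 0 := by
    rw [hS0def, expand2]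
    simp only [smul_mul_assoc, mul_smul_comm, smul_smul]
    exact brst_sum_symm_antisymm (fun a b => (∑ e, f b e e) * (∑ e, f a e e))
      (fun a b => gh a * gh b) (fun s t => mul_comm _ _) (fun s t => hghgh s t)
  have hMS : M * S0 + S0 * M = 0 := by
    have h3 : ∀ y a, (∑ b, f a b b) • ((J y * gh y) * gh a)
        + (∑ b, f a b b) • (gh a * (J y * gh y)) = 0 := by
      intro y a
      rw [← smul_add]
      have e0 : (J y * gh y) * gh a + gh a * (J y * gh y) = 0 := by
        have e1 : (J y * gh y) * gh a = J y * (gh y * gh a) := mul_assoc _ _ _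
        have e2 : gh a * (J y * gh y) = J y * (gh a * gh y) := by
          rw [← mul_assoc, ← hJgh y a, mul_assoc]
        rw [e1, e2, ← mul_add, hghgh y a, neg_add_cancel, mul_zero]
      rw [e0, smul_zero]
    have h1 : M * S0 = ∑ y, ∑ a, (∑ b, f a b b) • ((J y * gh y) * gh a) := by
      rw [hMdef, hS0def, expand2]
      simp only [mul_smul_comm]
    have h2 : S0 * M = ∑ y, ∑ a, (∑ b, f a b b) • (gh a * (J y * gh y)) := by
      rw [hMdef, hS0def, expand2]
      simp only [smul_mul_assoc]
      exact Finset.sum_comm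
    rw [h1, h2, ← Finset.sum_add_distrib]
    refine Finset.sum_eq_zero fun y _ => ?_
    rw [← Finset.sum_add_distrib]
    exact Finset.sum_eq_zero fun a _ => h3 y a
  have hMM : M * M = (2 : K)⁻¹ • (nu * Q) := by
    have h1 : M * M = ∑ a, ∑ b, (J a * J b) * (gh a * gh b) := by
      rw [hMdef, expand2]
      refine Finset.sum_congr rfl fun a _ => Finset.sum_congr rfl fun b _ => ?_
      rw [mul_assoc, ← mul_assoc (gh a), ← hJgh b a, mul_assoc, ← mul_assoc]
    have h2 : M * M = ∑ a, ∑ b, -((J b * J a) * (gh a * gh b)) := by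
      rw [h1, Finset.sum_comm]
      refine Finset.sum_congr rfl fun a _ => Finset.sum_congr rfl fun b _ => ?_
      rw [hghgh b a, mul_neg]
    have h4 : ∀ a b : Fin ℓ, (J a * J b) * (gh a * gh b) + -((J b * J a) * (gh a * gh b))
        = nu * (∑ c, f a b c • (J c * (gh a * gh b))) := by
      intro a b
      rw [← sub_eq_add_neg, ← sub_mul, hJ a b, mul_assoc]
      simp only [Finset.sum_mul, smul_mul_assoc]
    have hMMkey : M * M + M * M = nu * Q := by
      nth_rewrite 1 [h1]
      rw [h2]
      simp only [← Finset.sum_add_distrib]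
      simp only [h4]
      rw [hQdef]
      simp only [Finset.mul_sum]
    have h2' : (2:K) • (M * M) = nu * Q := by rw [two_smul]; exact hMMkey
    calc M * M = (2:K)⁻¹ • ((2:K) • (M * M)) := by rw [smul_smul]; norm_num
      _ = (2:K)⁻¹ • (nu * Q) := by rw [h2']
  have hTgh : ∀ y, T * gh y + gh y * T
      = ∑ a, ∑ b, (f a b y * 2) • (nu * (gh a * gh b)) := by
    intro y
    have h1 : T * gh y = ∑ a, ∑ b, ∑ c, f a b c • ((gh a * gh b * ag c) * gh y) := by
      rw [hTdef]
      simp only [Finset.sum_mul]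
      simp only [smul_mul_assoc]
    have h2 : gh y * T = ∑ a, ∑ b, ∑ c, f a b c • (gh a * gh b * (gh y * ag c)) := by
      rw [hTdef]
      simp only [Finset.mul_sum]
      simp only [mul_smul_comm]
      refine Finset.sum_congr rfl fun a _ => Finset.sum_congr rfl fun b _ =>
        Finset.sum_congr rfl fun c _ => ?_
      rw [← mul_assoc, hgh3, mul_assoc]
    rw [h1, h2]
    simp only [← Finset.sum_add_distrib]
    simp only [← smul_add]
    have e : ∀ a b c, (gh a * gh b * ag c) * gh y + gh a * gh b * (gh y * ag c)
        = gh a * gh b * (if c = y then (2:K) • nu else 0) := by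
      intro a b c; rw [mul_assoc, ← mul_add, hcliff' c y]
    simp only [e, mul_ite, mul_zero, smul_ite, smul_zero, Finset.sum_ite_eq',
      Finset.mem_univ, if_true]
    refine Finset.sum_congr rfl fun a _ => Finset.sum_congr rfl fun b _ => ?_
    rw [mul_smul_comm, hnu' (gh a * gh b), smul_smul]
  have hTM : T * M + M * T = (2 : K) • (nu * Q) := by
    have h1 : T * M + M * T = ∑ y, (J y * (T * gh y + gh y * T)) := by
      rw [hMdef, Finset.mul_sum, Finset.sum_mul, ← Finset.sum_add_distrib]
      refine Finset.sum_congr rfl fun y _ => ?_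
      rw [mul_add]
      congr 1
      · rw [← mul_assoc, ← hJT y, mul_assoc]
      · rw [mul_assoc]
    have h2 : ∀ y, J y * (T * gh y + gh y * T)
        = ∑ a, ∑ b, (f a b y * 2) • (nu * (J y * (gh a * gh b))) := by
      intro y
      rw [hTgh y, Finset.mul_sum]
      refine Finset.sum_congr rfl fun a _ => ?_
      rw [Finset.mul_sum]
      refine Finset.sum_congr rfl fun b _ => ?_
      rw [mul_smul_comm, ← mul_assoc, ← hnu (J y), mul_assoc]
    rw [h1]
    simp only [h2]
    rw [brst_rot3 (fun y a b => (f a b y * 2) • (nu * (J y * (gh a * gh b))))]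
    rw [hQdef]
    simp only [Finset.mul_sum, mul_smul_comm, Finset.smul_sum, smul_smul]
    refine Finset.sum_congr rfl fun a _ => Finset.sum_congr rfl fun b _ =>
      Finset.sum_congr rfl fun c _ => ?_
    rw [mul_comm]
  have hTS : T * S0 + S0 * T = 0 := by
    have h1 : T * S0 + S0 * T = ∑ y, (∑ e, f y e e) • (T * gh y + gh y * T) := by
      rw [hS0def, Finset.mul_sum, Finset.sum_mul, ← Finset.sum_add_distrib]
      refine Finset.sum_congr rfl fun y _ => ?_
      rw [mul_smul_comm, smul_mul_assoc, ← smul_add]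
    rw [h1]
    simp only [hTgh]
    simp only [Finset.smul_sum, smul_smul]
    rw [brst_rot3 (fun y a b => ((∑ e, f y e e) * (f a b y * 2)) • (nu * (gh a * gh b)))]
    refine Finset.sum_eq_zero fun a _ => Finset.sum_eq_zero fun b _ => ?_
    rw [← Finset.sum_smul]
    have hz : (∑ y, (∑ e, f y e e) * (f a b y * 2)) = 0 := by
      have e1 : (∑ y, (∑ e, f y e e) * (f a b y * 2))
          = (∑ y, f a b y * (∑ e, f y e e)) * 2 := by
        rw [Finset.sum_mul]
        exact Finset.sum_congr rfl fun y _ => by ring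
      rw [e1, htrace a b, zero_mul]
    rw [hz, zero_smul]
  have hTT : T * T = 0 := by
    have hacgg : ∀ c p q, ag c * (gh p * gh q)
        = (if c = p then (2:K) • nu else 0) * gh q
          - (if c = q then (2:K) • nu else 0) * gh p
          + gh p * gh q * ag c := by
      intro c p q
      calc ag c * (gh p * gh q) = (ag c * gh p) * gh q := (mul_assoc _ _ _).symm
        _ = ((if c = p then (2:K) • nu else 0) - gh p * ag c) * gh q := by rw [hcl]
        _ = (if c = p then (2:K) • nu else 0) * gh q - gh p * (ag c * gh q) := by
            rw [sub_mul, mul_assoc]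
        _ = (if c = p then (2:K) • nu else 0) * gh q
            - gh p * ((if c = q then (2:K) • nu else 0) - gh q * ag c) := by rw [hcl c q]
        _ = _ := by rw [mul_sub, hEw c q, ← mul_assoc]; abel
    have hblock : ∀ a b c p q r : Fin ℓ,
        (gh a * gh b * ag c) * (gh p * gh q * ag r)
        = (if c = p then (2:K) • nu else 0) * (gh a * gh b * (gh q * ag r))
          - (if c = q then (2:K) • nu else 0) * (gh a * gh b * (gh p * ag r))
          + gh a * gh b * (gh p * gh q * (ag c * ag r)) := by
      intro a b c p q r
      calc (gh a * gh b * ag c) * (gh p * gh q * ag r)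
          = (gh a * gh b) * ((ag c * (gh p * gh q)) * ag r) := by
            rw [mul_assoc, ← mul_assoc (ag c)]
        _ = _ := by
            rw [hacgg]
            simp only [sub_mul, add_mul, mul_sub, mul_add, mul_assoc, hEmove]
    set B : W := ∑ a, ∑ b, ∑ q, ∑ r,
      (∑ c, f a b c * f c q r) • (nu * (gh a * gh b * (gh q * ag r))) with hBdef
    have hexp : T * T = ∑ a, ∑ b, ∑ c, ∑ p, ∑ q, ∑ r,
        (f a b c * f p q r) • ((gh a * gh b * ag c) * (gh p * gh q * ag r)) := by
      rw [hTdef]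
      simp only [Finset.sum_mul]
      simp only [smul_mul_assoc]
      simp only [Finset.mul_sum]
      simp only [mul_smul_comm]
      simp only [Finset.smul_sum]
      simp only [smul_smul]
    have hsplit : T * T
        = ((∑ a, ∑ b, ∑ c, ∑ p, ∑ q, ∑ r,
            (f a b c * f p q r) • ((if c = p then (2:K) • nu else 0) * (gh a * gh b * (gh q * ag r))))
          - (∑ a, ∑ b, ∑ c, ∑ p, ∑ q, ∑ r,
            (f a b c * f p q r) • ((if c = q then (2:K) • nu else 0) * (gh a * gh b * (gh p * ag r)))))
          + (∑ a, ∑ b, ∑ c, ∑ p, ∑ q, ∑ r,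
            (f a b c * f p q r) • (gh a * gh b * (gh p * gh q * (ag c * ag r)))) := by
      rw [hexp]
      simp only [hblock]
      simp only [smul_sub, smul_add]
      simp only [Finset.sum_add_distrib, Finset.sum_sub_distrib]
    have hX1 : (∑ a, ∑ b, ∑ c, ∑ p, ∑ q, ∑ r,
        (f a b c * f p q r) • ((if c = p then (2:K) • nu else 0) * (gh a * gh b * (gh q * ag r))))
        = (2:K) • B := by
      simp only [ite_mul, zero_mul, smul_ite, smul_zero]
      have e1 : ∀ a b c : Fin ℓ, (∑ p, ∑ q, ∑ r, (if c = p then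
            (f a b c * f p q r) • (((2:K) • nu) * (gh a * gh b * (gh q * ag r))) else 0))
          = ∑ q, ∑ r, ∑ p, (if c = p then
            (f a b c * f p q r) • (((2:K) • nu) * (gh a * gh b * (gh q * ag r))) else 0) :=
        fun a b c => brst_rot3 _
      simp only [e1]
      simp only [Finset.sum_ite_eq, Finset.mem_univ, if_true]
      have e2 : ∀ a b : Fin ℓ, (∑ c, ∑ q, ∑ r,
            (f a b c * f c q r) • (((2:K) • nu) * (gh a * gh b * (gh q * ag r))))
          = ∑ q, ∑ r, ∑ c,
            (f a b c * f c q r) • (((2:K) • nu) * (gh a * gh b * (gh q * ag r))) :=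
        fun a b => brst_rot3 _
      simp only [e2]
      simp only [← Finset.sum_smul]
      rw [hBdef]
      simp only [Finset.smul_sum]
      refine Finset.sum_congr rfl fun a _ => Finset.sum_congr rfl fun b _ =>
        Finset.sum_congr rfl fun q _ => Finset.sum_congr rfl fun r _ => ?_
      rw [smul_mul_assoc, smul_comm]
    have hX2 : (∑ a, ∑ b, ∑ c, ∑ p, ∑ q, ∑ r,
        (f a b c * f p q r) • ((if c = q then (2:K) • nu else 0) * (gh a * gh b * (gh p * ag r))))
        = -((2:K) • B) := by
      simp only [ite_mul, zero_mul, smul_ite, smul_zero]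
      have e1 : ∀ a b c p : Fin ℓ, (∑ q, ∑ r, (if c = q then
            (f a b c * f p q r) • (((2:K) • nu) * (gh a * gh b * (gh p * ag r))) else 0))
          = ∑ r, ∑ q, (if c = q then
            (f a b c * f p q r) • (((2:K) • nu) * (gh a * gh b * (gh p * ag r))) else 0) :=
        fun a b c p => Finset.sum_comm
      simp only [e1]
      simp only [Finset.sum_ite_eq, Finset.mem_univ, if_true]
      have e2 : ∀ a b c p r : Fin ℓ,
          (f a b c * f p c r) • (((2:K) • nu) * (gh a * gh b * (gh p * ag r)))
          = -((f a b c * f c p r) • (((2:K) • nu) * (gh a * gh b * (gh p * ag r)))) := by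
        intro a b c p r; rw [hfanti p c, mul_neg, neg_smul]
      simp only [e2]
      simp only [Finset.sum_neg_distrib]
      refine neg_inj.mpr ?_
      have e3 : ∀ a b : Fin ℓ, (∑ c, ∑ p, ∑ r,
            (f a b c * f c p r) • (((2:K) • nu) * (gh a * gh b * (gh p * ag r))))
          = ∑ p, ∑ r, ∑ c,
            (f a b c * f c p r) • (((2:K) • nu) * (gh a * gh b * (gh p * ag r))) :=
        fun a b => brst_rot3 _
      simp only [e3]
      simp only [← Finset.sum_smul]
      rw [hBdef]
      simp only [Finset.smul_sum]
      refine Finset.sum_congr rfl fun a _ => Finset.sum_congr rfl fun b _ =>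
        Finset.sum_congr rfl fun q _ => Finset.sum_congr rfl fun r _ => ?_
      rw [smul_mul_assoc, smul_comm]
    have hpair : ∀ a b p q : Fin ℓ,
        gh a * gh b * (gh p * gh q) = gh p * gh q * (gh a * gh b) := by
      intro a b p q
      calc gh a * gh b * (gh p * gh q) = gh a * (gh b * (gh p * gh q)) := mul_assoc _ _ _
        _ = gh a * (gh p * gh q * gh b) := by rw [hgh3 b p q]
        _ = (gh a * (gh p * gh q)) * gh b := by rw [← mul_assoc]
        _ = (gh p * gh q * gh a) * gh b := by rw [hgh3 a p q]
        _ = gh p * gh q * (gh a * gh b) := mul_assoc _ _ _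
    have hU : ∀ s t : Fin ℓ × Fin ℓ × Fin ℓ,
        gh s.1 * gh s.2.1 * (gh t.1 * gh t.2.1 * (ag s.2.2 * ag t.2.2))
        = -(gh t.1 * gh t.2.1 * (gh s.1 * gh s.2.1 * (ag t.2.2 * ag s.2.2))) := by
      intro s t
      obtain ⟨a, b, c⟩ := s; obtain ⟨p, q, r⟩ := t
      dsimp only
      rw [hagag r c, mul_neg, mul_neg, neg_neg]
      rw [← mul_assoc (gh a * gh b) (gh p * gh q), ← mul_assoc (gh p * gh q) (gh a * gh b),
        hpair]
    have hX3 : (∑ a, ∑ b, ∑ c, ∑ p, ∑ q, ∑ r,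
        (f a b c * f p q r) • (gh a * gh b * (gh p * gh q * (ag c * ag r)))) = 0 := by
      have h := brst_sum_symm_antisymm (ι := Fin ℓ × Fin ℓ × Fin ℓ)
        (fun s t => f s.1 s.2.1 s.2.2 * f t.1 t.2.1 t.2.2)
        (fun s t => gh s.1 * gh s.2.1 * (gh t.1 * gh t.2.1 * (ag s.2.2 * ag t.2.2)))
        (fun s t => mul_comm _ _) hU
      simpa only [Fintype.sum_prod_type] using h
    have hjac3 : ∀ a b q r : Fin ℓ,
        ((∑ c, f a b c * f c q r) + (∑ c, f b q c * f c a r)) + (∑ c, f q a c * f c b r)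
          = 0 := by
      intro a b q r
      have h := hfjac a b q r
      simp only [Finset.sum_add_distrib] at h
      exact h
    have hgperm1 : ∀ a b q r : Fin ℓ,
        nu * (gh b * gh q * (gh a * ag r)) = nu * (gh a * gh b * (gh q * ag r)) := by
      intro a b q r
      congr 1
      calc gh b * gh q * (gh a * ag r) = (gh b * gh q * gh a) * ag r := (mul_assoc _ _ _).symm
        _ = (gh a * gh b * gh q) * ag r := by rw [hp3]
        _ = gh a * gh b * (gh q * ag r) := mul_assoc _ _ _
    have hgperm2 : ∀ a b q r : Fin ℓ,
        nu * (gh q * gh a * (gh b * ag r)) = nu * (gh a * gh b * (gh q * ag r)) := by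
      intro a b q r
      congr 1
      calc gh q * gh a * (gh b * ag r) = (gh q * gh a * gh b) * ag r := (mul_assoc _ _ _).symm
        _ = (gh a * gh b * gh q) * ag r := by rw [hp3']
        _ = gh a * gh b * (gh q * ag r) := mul_assoc _ _ _
    have hB3' : B = ∑ a, ∑ b, ∑ q, ∑ r,
        (∑ c, f q a c * f c b r) • (nu * (gh a * gh b * (gh q * ag r))) := by
      rw [hBdef]
      rw [brst_rot3 (fun a b q => ∑ r,
        (∑ c, f a b c * f c q r) • (nu * (gh a * gh b * (gh q * ag r))))]
      simp only [hgperm2]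
    have hB2' : B = ∑ a, ∑ b, ∑ q, ∑ r,
        (∑ c, f b q c * f c a r) • (nu * (gh a * gh b * (gh q * ag r))) := by
      rw [hBdef]
      rw [brst_rot3 (fun a b q => ∑ r,
        (∑ c, f a b c * f c q r) • (nu * (gh a * gh b * (gh q * ag r))))]
      rw [brst_rot3 (fun x y z => ∑ r,
        (∑ c, f z x c * f c y r) • (nu * (gh z * gh x * (gh y * ag r))))]
      simp only [hgperm1]
    have h3B : B + B + B = 0 := by
      nth_rewrite 2 [hB2']
      nth_rewrite 2 [hB3']
      rw [hBdef]
      simp only [← Finset.sum_add_distrib]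
      simp only [← add_smul]
      simp only [hjac3, zero_smul, Finset.sum_const_zero]
    have hB0 : B = 0 := by
      refine brst_smul_cancel (K := K) 3 (by norm_num) _ ?_
      have h3 : ((3:ℕ):K) • B = B + B + B := by
        rw [show ((3:ℕ):K) = 1+1+1 by norm_num, add_smul, add_smul, one_smul]
      rw [h3, h3B]
    rw [hsplit, hX1, hX2, hX3, hB0]
    simp
  -- assemble
  set x : W := - ((4 : K)⁻¹ • T) with hxdef
  set y : W := M with hydef
  set z : W := (2 : K)⁻¹ • (nu * S0) with hzdef
  have expand : (x + y + z) * (x + y + z)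
      = x*x + (x*y + y*x + y*y) + (x*z + z*x) + (y*z + z*y) + z*z := by
    noncomm_ring
  rw [expand]
  have g1 : x * x = 0 := by
    rw [hxdef, neg_mul_neg, smul_mul_assoc, mul_smul_comm, hTT, smul_zero, smul_zero]
  have g2 : x*y + y*x + y*y = 0 := by
    rw [hxdef, hydef, neg_mul, mul_neg, smul_mul_assoc, mul_smul_comm, ← neg_add,
      ← smul_add, hTM, hMM, smul_smul]
    have : (4 : K)⁻¹ * 2 = (2 : K)⁻¹ := by norm_num
    rw [this, neg_add_cancel]
  have g3 : x*z + z*x = 0 := by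
    have e1 : T * (nu * S0) = nu * (T * S0) := by rw [← mul_assoc, ← hnu T, mul_assoc]
    have e2 : (nu * S0) * T = nu * (S0 * T) := mul_assoc _ _ _
    rw [hxdef, hzdef, neg_mul, mul_neg, smul_mul_assoc, mul_smul_comm,
      mul_smul_comm, smul_mul_assoc, e1, e2, smul_smul, smul_smul,
      ← neg_add, ← smul_add, ← mul_add, hTS,
      mul_zero, smul_zero, neg_zero]
  have g4 : y*z + z*y = 0 := by
    have e1 : M * (nu * S0) = nu * (M * S0) := by rw [← mul_assoc, ← hnu M, mul_assoc]
    have e2 : (nu * S0) * M = nu * (S0 * M) := mul_assoc _ _ _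
    rw [hydef, hzdef, mul_smul_comm, smul_mul_assoc, e1, e2, ← smul_add, ← mul_add,
      hMS, mul_zero, smul_zero]
  have g5 : z*z = 0 := by
    have e1 : (nu * S0) * (nu * S0) = nu * (nu * (S0 * S0)) := by
      rw [mul_assoc, ← mul_assoc S0, ← hnu S0, mul_assoc]
    rw [hzdef, smul_mul_assoc, mul_smul_comm, e1, hSS, mul_zero, mul_zero,
      smul_zero, smul_zero]
  rw [g1, g2, g3, g4, g5]
  simp
end

section
/- Cartan-type commutation for the quantum Koszul differential: For every X ∈ g, the deformed representation operator ρ_X commutes with the quantum Koszul differential ∂̂: ρ_X ∂̂ − ∂̂ ρ_X = 0. This follows from the Cartan homotopy formula ρ_X = i_X δ̂ + δ̂ i_X with the insertion derivation i_X = Σ_a X^a ∂/∂ξ^a, together with δ̂∂̂ + ∂̂δ̂ = 0 and [i_X, ∂̂] = 0. -/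
open scoped BigOperators

namespace QuantumKoszul

variable {R : Type*} [Ring R] {ℓ : ℕ}

/-- Coordinate model for the quantum Koszul chains `K_•[[ν]] = A[[ν]] ⊗ Λ g`:
the coefficient of the antighost monomial `ξ_T` (written in increasing order), with
values in the star-product algebra `R = C^∞(M)[[ν]]`. -/
abbrev OmegaK (R : Type*) (ℓ : ℕ) : Type _ := Finset (Fin ℓ) → R

/-- The odd left derivative `∂/∂ξ_a` with respect to the antighost `ξ_a`. -/
def dAgK (a : Fin ℓ) (F : OmegaK R ℓ) : OmegaK R ℓ :=
  fun T => if a ∈ T then 0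
    else ((-1 : ℤ) ^ (T.filter (fun t => t < a)).card) • F (insert a T)

/-- Left multiplication by the antighost `ξ_a`. -/
def LAgK (a : Fin ℓ) (F : OmegaK R ℓ) : OmegaK R ℓ :=
  fun T => if a ∈ T then
    ((-1 : ℤ) ^ (T.filter (fun t => t < a)).card) • F (T.erase a) else 0

end QuantumKoszul

open QuantumKoszul

/-!
The antighost operators `ξ_c = LAgK c` and `∂_b = dAgK b` satisfy the canonical anticommutation
relations, so the ghost part `∑ f_abc ξ_c ∂_b` of `ρ_a` is the second quantization `dΓ(ad_a)`.
Commuting with `ρ_a` therefore acts on the `∂_p` by the coadjoint action, and on `dΓ(ad_p)` by the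
adjoint action (Jacobi identity). Every term of `∂̂` has the form `∑_p Z_p ∂_p` with `Z` an
adjoint family: right multiplication by `𝐉_p` (the quantum moment map relation), the scalars
`tr ad_p` (the trace vanishes on `[g, g]`), and `dΓ(ad_p)` (the cubic term is
`-∑_p dΓ(ad_p) ∂_p`), the last two behind the factor `ν`, which commutes with `ρ_a`. Pairing an
adjoint family with a coadjoint one gives an invariant.
-/

namespace Ring

variable {A : Type*} [Ring A]

lemma lie_mul_right (x y z : A) : ⁅x, y * z⁆ = ⁅x, y⁆ * z + y * ⁅x, z⁆ := by
  simp only [lie_def]; noncomm_ring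

lemma lie_mul_left_eq_anticomm (x d e : A) :
    ⁅x * d, e⁆ = x * (d * e + e * d) - (e * x + x * e) * d := by
  simp only [lie_def]; noncomm_ring

lemma lie_add (x y z : A) : ⁅x, y + z⁆ = ⁅x, y⁆ + ⁅x, z⁆ := by
  simp only [lie_def]; noncomm_ring

lemma add_lie (x y z : A) : ⁅x + y, z⁆ = ⁅x, z⁆ + ⁅y, z⁆ := by
  simp only [lie_def]; noncomm_ring

lemma sum_lie {ι : Type*} (s : Finset ι) (x : ι → A) (y : A) :
    ⁅∑ i ∈ s, x i, y⁆ = ∑ i ∈ s, ⁅x i, y⁆ := by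
  simp only [lie_def, Finset.mul_sum, Finset.sum_mul, Finset.sum_sub_distrib]

lemma lie_sum {ι : Type*} (s : Finset ι) (x : A) (y : ι → A) :
    ⁅x, ∑ i ∈ s, y i⁆ = ∑ i ∈ s, ⁅x, y i⁆ := by
  simp only [lie_def, Finset.mul_sum, Finset.sum_mul, Finset.sum_sub_distrib]

variable {K : Type*} [CommRing K] [Algebra K A]

lemma smul_lie (k : K) (x y : A) : ⁅k • x, y⁆ = k • ⁅x, y⁆ := by
  simp only [lie_def, mul_smul_comm, smul_mul_assoc, smul_sub]

lemma lie_smul (k : K) (x y : A) : ⁅x, k • y⁆ = k • ⁅x, y⁆ := by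
  simp only [lie_def, mul_smul_comm, smul_mul_assoc, smul_sub]

lemma lie_sum_mul_eq_zero {ι : Type*} [Fintype ι] (g : ι → ι → K) (x : A) (z d : ι → A)
    (hz : ∀ p, ⁅x, z p⁆ = ∑ c, g p c • z c) (hd : ∀ p, ⁅x, d p⁆ = -∑ b, g b p • d b) :
    ⁅x, ∑ p, z p * d p⁆ = 0 := by
  simp only [lie_sum, lie_mul_right, hz, hd, Finset.sum_mul, mul_neg, Finset.mul_sum,
    smul_mul_assoc, mul_smul_comm, ← sub_eq_add_neg, Finset.sum_sub_distrib, sub_eq_zero]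
  exact Finset.sum_comm

end Ring

namespace QuantumKoszul

open Finset

section StructureConstants

variable {K : Type*} [CommRing K] {ℓ : ℕ} (f : Fin ℓ → Fin ℓ → Fin ℓ → K)

def adMatrix (a : Fin ℓ) : Matrix (Fin ℓ) (Fin ℓ) K := Matrix.of fun c b => f a b c

structure IsLieStructureConstants : Prop where
  antisymm : ∀ a b c, f a b c = - f b a c
  jacobi : ∀ a b c d, (∑ e, (f a b e * f e c d + f b c e * f e a d + f c a e * f e b d)) = 0

variable {f}

lemma IsLieStructureConstants.adMatrix_mul_sub_mul (hf : IsLieStructureConstants f)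
    (a b : Fin ℓ) :
    adMatrix f a * adMatrix f b - adMatrix f b * adMatrix f a = ∑ c, f a b c • adMatrix f c := by
  ext r q
  have h := hf.jacobi a b q r
  simp only [sum_add_distrib] at h
  have h₂ : ∑ e, f b q e * f e a r = -∑ e, f a e r * f b q e := by
    rw [← sum_neg_distrib]; exact sum_congr rfl fun e _ => by rw [hf.antisymm e a r]; ring
  have h₃ : ∑ e, f q a e * f e b r = ∑ e, f b e r * f a q e :=
    sum_congr rfl fun e _ => by rw [hf.antisymm q a e, hf.antisymm e b r]; ring
  simp only [Matrix.sub_apply, Matrix.mul_apply, Matrix.sum_apply, Matrix.smul_apply, adMatrix,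
    Matrix.of_apply, smul_eq_mul]
  linear_combination -h + h₂ + h₃

lemma IsLieStructureConstants.sum_mul_trace_adMatrix (hf : IsLieStructureConstants f)
    (a b : Fin ℓ) : ∑ c, f a b c * (adMatrix f c).trace = 0 := by
  simp_rw [← smul_eq_mul, ← Matrix.trace_smul, ← Matrix.trace_sum, ← hf.adMatrix_mul_sub_mul]
  rw [Matrix.trace_sub, Matrix.trace_mul_comm, sub_self]

end StructureConstants

section CanonicalAnticommutation

variable {K A : Type*} [CommRing K] [Ring A] [Algebra K A] {ℓ : ℕ}

structure CanonicalAnticommutation (ξ D : Fin ℓ → A) : Prop where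
  creation_anticomm : ∀ a b, ξ a * ξ b + ξ b * ξ a = 0
  annihilation_anticomm : ∀ a b, D a * D b + D b * D a = 0
  annihilation_creation_anticomm : ∀ a b, D a * ξ b + ξ b * D a = if a = b then 1 else 0

variable (K) in
def secondQuantization (ξ D : Fin ℓ → A) : Matrix (Fin ℓ) (Fin ℓ) K →ₗ[K] A where
  toFun M := ∑ b, ∑ c, M c b • (ξ c * D b)
  map_add' M N := by simp only [Matrix.add_apply, add_smul, sum_add_distrib]
  map_smul' k M := by
    simp only [Matrix.smul_apply, smul_eq_mul, mul_smul, smul_sum, RingHom.id_apply]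

variable {ξ D : Fin ℓ → A}

lemma secondQuantization_apply (M : Matrix (Fin ℓ) (Fin ℓ) K) :
    secondQuantization K ξ D M = ∑ b, ∑ c, M c b • (ξ c * D b) :=
  rfl

lemma commute_secondQuantization {x : A} (hξ : ∀ c, Commute x (ξ c)) (hD : ∀ b, Commute x (D b))
    (M : Matrix (Fin ℓ) (Fin ℓ) K) : Commute x (secondQuantization K ξ D M) := by
  rw [secondQuantization_apply]
  exact Commute.sum_right _ _ _ fun b _ => Commute.sum_right _ _ _ fun c _ =>
    ((hξ c).mul_right (hD b)).smul_right _

namespace CanonicalAnticommutation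

lemma lie_creation_mul_annihilation_annihilation (h : CanonicalAnticommutation ξ D)
    (c b p : Fin ℓ) : ⁅ξ c * D b, D p⁆ = -(if p = c then D b else 0) := by
  rw [Ring.lie_mul_left_eq_anticomm, h.annihilation_anticomm, h.annihilation_creation_anticomm]
  split_ifs <;> simp

lemma lie_creation_mul_annihilation_creation (h : CanonicalAnticommutation ξ D)
    (c b r : Fin ℓ) : ⁅ξ c * D b, ξ r⁆ = if b = r then ξ c else 0 := by
  rw [Ring.lie_mul_left_eq_anticomm, h.annihilation_creation_anticomm, h.creation_anticomm]
  split_ifs <;> simp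

lemma lie_secondQuantization_annihilation (h : CanonicalAnticommutation ξ D)
    (M : Matrix (Fin ℓ) (Fin ℓ) K) (p : Fin ℓ) :
    ⁅secondQuantization K ξ D M, D p⁆ = -∑ b, M p b • D b := by
  simp only [secondQuantization_apply, Ring.sum_lie, Ring.smul_lie,
    h.lie_creation_mul_annihilation_annihilation, smul_neg, smul_ite, smul_zero,
    sum_neg_distrib, sum_ite_eq, mem_univ, if_true]

lemma lie_secondQuantization_creation (h : CanonicalAnticommutation ξ D)
    (M : Matrix (Fin ℓ) (Fin ℓ) K) (r : Fin ℓ) :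
    ⁅secondQuantization K ξ D M, ξ r⁆ = ∑ c, M c r • ξ c := by
  simp only [secondQuantization_apply, Ring.sum_lie, Ring.smul_lie,
    h.lie_creation_mul_annihilation_creation, smul_ite, smul_zero]
  rw [sum_comm]
  simp only [sum_ite_eq', mem_univ, if_true]

lemma lie_secondQuantization (h : CanonicalAnticommutation ξ D)
    (M N : Matrix (Fin ℓ) (Fin ℓ) K) :
    ⁅secondQuantization K ξ D M, secondQuantization K ξ D N⁆
      = secondQuantization K ξ D (M * N - N * M) := by
  have hMN : ∑ b, ∑ c, N c b • ∑ e, M e c • (ξ e * D b)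
      = ∑ b, ∑ c, ∑ e, (M c e * N e b) • (ξ c * D b) := by
    simp only [smul_sum, smul_smul]
    exact sum_congr rfl fun b _ => by rw [sum_comm]; simp only [mul_comm]
  have hNM : ∑ b, ∑ c, N c b • ∑ e, M b e • (ξ c * D e)
      = ∑ b, ∑ c, ∑ e, (N c e * M e b) • (ξ c * D b) := by
    simp only [smul_sum, smul_smul]
    rw [sum_comm, sum_congr rfl fun c _ => sum_comm, sum_comm]
  conv_lhs => rw [secondQuantization_apply N]
  simp only [Ring.lie_sum, Ring.lie_smul, Ring.lie_mul_right, h.lie_secondQuantization_creation,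
    h.lie_secondQuantization_annihilation, sum_mul, mul_neg, mul_sum, smul_mul_assoc,
    mul_smul_comm, ← sub_eq_add_neg, smul_sub, sum_sub_distrib, hMN, hNM]
  simp only [map_sub, secondQuantization_apply, Matrix.mul_apply, sum_smul]

end CanonicalAnticommutation

end CanonicalAnticommutation

section QuantumKoszulOperator

variable {K A : Type*} [CommRing K] [Ring A] [Algebra K A] {ℓ : ℕ} {ξ D : Fin ℓ → A}
  {f : Fin ℓ → Fin ℓ → Fin ℓ → K}

lemma lie_add_secondQuantization_annihilation (h : CanonicalAnticommutation ξ D) {x : A}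
    (hxD : ∀ b, Commute x (D b)) (a p : Fin ℓ) :
    ⁅x + secondQuantization K ξ D (adMatrix f a), D p⁆ = -∑ b, f a b p • D b := by
  rw [Ring.add_lie, (hxD p).lie_eq, zero_add, h.lie_secondQuantization_annihilation]
  rfl

lemma lie_add_secondQuantization_sum_mul_annihilation (h : CanonicalAnticommutation ξ D)
    {x : A} (hxD : ∀ b, Commute x (D b)) (a : Fin ℓ) (z : Fin ℓ → A)
    (hz : ∀ p, ⁅x + secondQuantization K ξ D (adMatrix f a), z p⁆ = ∑ c, f a p c • z c) :
    ⁅x + secondQuantization K ξ D (adMatrix f a), ∑ p, z p * D p⁆ = 0 :=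
  Ring.lie_sum_mul_eq_zero _ _ z D hz (lie_add_secondQuantization_annihilation h hxD a)

lemma lie_add_secondQuantization_sum_mul_annihilation_of_commute
    (h : CanonicalAnticommutation ξ D) {x : A} (hxD : ∀ b, Commute x (D b)) (a : Fin ℓ)
    (z : Fin ℓ → A) (hzξ : ∀ p c, Commute (z p) (ξ c)) (hzD : ∀ p b, Commute (z p) (D b))
    (hxz : ∀ p, ⁅x, z p⁆ = ∑ c, f a p c • z c) :
    ⁅x + secondQuantization K ξ D (adMatrix f a), ∑ p, z p * D p⁆ = 0 := by
  refine lie_add_secondQuantization_sum_mul_annihilation h hxD a z fun p => ?_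
  rw [Ring.add_lie, hxz, ((commute_secondQuantization (hzξ p) (hzD p) _).symm).lie_eq, add_zero]

lemma lie_add_secondQuantization_sum_trace_smul_annihilation
    (hf : IsLieStructureConstants f) (h : CanonicalAnticommutation ξ D) {x : A} (hxD : ∀ b, Commute x (D b)) (a : Fin ℓ) :
    ⁅x + secondQuantization K ξ D (adMatrix f a), ∑ p, (adMatrix f p).trace • D p⁆ = 0 := by
  simp only [Algebra.smul_def]
  refine lie_add_secondQuantization_sum_mul_annihilation h hxD a _ fun p => ?_
  rw [(Algebra.commute_algebraMap_right _ _).lie_eq]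
  simp only [Algebra.smul_def, ← map_mul, ← map_sum, hf.sum_mul_trace_adMatrix,
    map_zero]

lemma lie_add_secondQuantization_sum_secondQuantization_mul_annihilation
    (hf : IsLieStructureConstants f) (h : CanonicalAnticommutation ξ D) {x : A} (hxξ : ∀ c, Commute x (ξ c))
    (hxD : ∀ b, Commute x (D b)) (a : Fin ℓ) :
    ⁅x + secondQuantization K ξ D (adMatrix f a),
      ∑ p, secondQuantization K ξ D (adMatrix f p) * D p⁆ = 0 := by
  refine lie_add_secondQuantization_sum_mul_annihilation h hxD a _ fun p => ?_
  rw [Ring.add_lie, (commute_secondQuantization hxξ hxD _).lie_eq, zero_add,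
    h.lie_secondQuantization, hf.adMatrix_mul_sub_mul, map_sum]
  simp only [map_smul]

lemma sum_smul_creation_mul_annihilation_mul_annihilation (h : CanonicalAnticommutation ξ D) :
    ∑ p, ∑ q, ∑ r, f p q r • (ξ r * D p * D q)
      = -∑ p, secondQuantization K ξ D (adMatrix f p) * D p := by
  simp only [secondQuantization_apply, adMatrix, Matrix.of_apply, sum_mul, smul_mul_assoc,
    mul_assoc, ← sum_neg_distrib, ← smul_neg, ← mul_neg]
  exact sum_congr rfl fun p _ => sum_congr rfl fun q _ => sum_congr rfl fun r _ => by
    rw [mul_neg, ← eq_neg_of_add_eq_zero_left (h.annihilation_anticomm p q)]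

lemma lie_add_secondQuantization_quantumKoszul_eq_zero
    (hf : IsLieStructureConstants f) (h : CanonicalAnticommutation ξ D) {x n : A} (z : Fin ℓ → A)
    (hxξ : ∀ c, Commute x (ξ c)) (hxD : ∀ b, Commute x (D b))
    (hzξ : ∀ p c, Commute (z p) (ξ c)) (hzD : ∀ p b, Commute (z p) (D b))
    (hnξ : ∀ c, Commute n (ξ c)) (hnD : ∀ b, Commute n (D b)) (hxn : Commute x n)
    (a : Fin ℓ) (hxz : ∀ p, ⁅x, z p⁆ = ∑ c, f a p c • z c) (s t : K) :
    ⁅x + secondQuantization K ξ D (adMatrix f a), ∑ p, z p * D p +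
      n * (s • ∑ p, (adMatrix f p).trace • D p
        + t • ∑ p, ∑ q, ∑ r, f p q r • (ξ r * D p * D q))⁆ = 0 := by
  rw [sum_smul_creation_mul_annihilation_mul_annihilation h, smul_neg, ← neg_smul,
    Ring.lie_add, Ring.lie_mul_right, Ring.lie_add, Ring.lie_smul, Ring.lie_smul,
    lie_add_secondQuantization_sum_mul_annihilation_of_commute h hxD a z hzξ hzD hxz,
    lie_add_secondQuantization_sum_trace_smul_annihilation hf h hxD,
    lie_add_secondQuantization_sum_secondQuantization_mul_annihilation hf h hxξ hxD,
    (hxn.add_left (commute_secondQuantization hnξ hnD _).symm).lie_eq]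
  simp

end QuantumKoszulOperator

section Signs

variable {ℓ : ℕ}

lemma neg_one_pow_card_filter_insert (x a : Fin ℓ) {T : Finset (Fin ℓ)} (hx : x ∉ T) :
    (-1 : ℤ) ^ ((insert x T).filter (· < a)).card =
      (if x < a then -1 else 1) * (-1 : ℤ) ^ (T.filter (· < a)).card := by
  rw [filter_insert]
  split_ifs with h
  · rw [card_insert_of_notMem fun hc => hx (mem_of_mem_filter _ hc), pow_succ, mul_comm]
  · rw [one_mul]

lemma neg_one_pow_card_filter_erase (x a : Fin ℓ) {T : Finset (Fin ℓ)} (hx : x ∈ T) :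
    (-1 : ℤ) ^ ((T.erase x).filter (· < a)).card =
      (if x < a then -1 else 1) * (-1 : ℤ) ^ (T.filter (· < a)).card := by
  have h := neg_one_pow_card_filter_insert x a (notMem_erase x T)
  rw [insert_erase hx] at h
  rw [h, ← mul_assoc]
  split_ifs <;> norm_num

end Signs

section Coordinates

variable {R : Type*} [Ring R] {ℓ : ℕ} {a : Fin ℓ} {T : Finset (Fin ℓ)} (F : OmegaK R ℓ)

lemma dAgK_apply_of_mem (h : a ∈ T) : dAgK a F T = 0 := if_pos h

lemma dAgK_apply_of_notMem (h : a ∉ T) :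
    dAgK a F T = (-1 : ℤ) ^ (T.filter (· < a)).card • F (insert a T) := if_neg h

lemma LAgK_apply_of_mem (h : a ∈ T) :
    LAgK a F T = (-1 : ℤ) ^ (T.filter (· < a)).card • F (T.erase a) := if_pos h

lemma LAgK_apply_of_notMem (h : a ∉ T) : LAgK a F T = 0 := if_neg h

end Coordinates

section Antighosts

variable (K R : Type*) [CommRing K] [Ring R] [Algebra K R] {ℓ : ℕ}

def antighostDeriv (a : Fin ℓ) : Module.End K (OmegaK R ℓ) where
  toFun := dAgK a
  map_add' F G := funext fun T => by by_cases h : a ∈ T <;> simp [dAgK, h]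
  map_smul' k F := funext fun T => by by_cases h : a ∈ T <;> simp [dAgK, h, smul_comm]

def antighostMul (a : Fin ℓ) : Module.End K (OmegaK R ℓ) where
  toFun := LAgK a
  map_add' F G := funext fun T => by by_cases h : a ∈ T <;> simp [LAgK, h]
  map_smul' k F := funext fun T => by by_cases h : a ∈ T <;> simp [LAgK, h, smul_comm]

variable {K R}

lemma antighostDeriv_anticomm (a b : Fin ℓ) :
    antighostDeriv K R a * antighostDeriv K R b + antighostDeriv K R b * antighostDeriv K R a
      = 0 := by
  refine LinearMap.ext fun F => funext fun T => ?_
  change dAgK a (dAgK b F) T + dAgK b (dAgK a F) T = 0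
  by_cases ha : a ∈ T
  · by_cases hb : b ∈ T
    · simp [dAgK_apply_of_mem _ ha, dAgK_apply_of_mem _ hb]
    · rw [dAgK_apply_of_mem _ ha, dAgK_apply_of_notMem _ hb,
        dAgK_apply_of_mem _ (mem_insert_of_mem ha), smul_zero, zero_add]
  by_cases hb : b ∈ T
  · rw [dAgK_apply_of_mem _ hb, dAgK_apply_of_notMem _ ha,
      dAgK_apply_of_mem _ (mem_insert_of_mem hb), smul_zero, add_zero]
  rcases eq_or_ne a b with rfl | hab
  · rw [dAgK_apply_of_notMem _ ha, dAgK_apply_of_mem _ (mem_insert_self a T), smul_zero,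
      add_zero]
  rw [dAgK_apply_of_notMem _ ha, dAgK_apply_of_notMem _ hb,
    dAgK_apply_of_notMem _ (by simp [hb, hab.symm] : b ∉ insert a T),
    dAgK_apply_of_notMem _ (by simp [ha, hab] : a ∉ insert b T), insert_comm b a,
    neg_one_pow_card_filter_insert a b ha, neg_one_pow_card_filter_insert b a hb, smul_smul,
    smul_smul, ← add_smul]
  rcases hab.lt_or_gt with h | h <;> simp [h, h.not_gt, mul_comm]

lemma antighostMul_anticomm (a b : Fin ℓ) :
    antighostMul K R a * antighostMul K R b + antighostMul K R b * antighostMul K R a = 0 := by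
  refine LinearMap.ext fun F => funext fun T => ?_
  change LAgK a (LAgK b F) T + LAgK b (LAgK a F) T = 0
  by_cases ha : a ∈ T
  swap
  · by_cases hb : b ∈ T
    · rw [LAgK_apply_of_notMem _ ha, LAgK_apply_of_mem _ hb,
        LAgK_apply_of_notMem _ fun h => ha (mem_of_mem_erase h), smul_zero, add_zero]
    · rw [LAgK_apply_of_notMem _ ha, LAgK_apply_of_notMem _ hb, add_zero]
  by_cases hb : b ∈ T
  swap
  · rw [LAgK_apply_of_notMem _ hb, LAgK_apply_of_mem _ ha,
      LAgK_apply_of_notMem _ fun h => hb (mem_of_mem_erase h), smul_zero, zero_add]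
  rcases eq_or_ne a b with rfl | hab
  · rw [LAgK_apply_of_mem _ ha, LAgK_apply_of_notMem _ (notMem_erase a T), smul_zero,
      add_zero]
  rw [LAgK_apply_of_mem _ ha, LAgK_apply_of_mem _ hb,
    LAgK_apply_of_mem _ (mem_erase.2 ⟨hab.symm, hb⟩ : b ∈ T.erase a),
    LAgK_apply_of_mem _ (mem_erase.2 ⟨hab, ha⟩ : a ∈ T.erase b), erase_right_comm (a := a),
    neg_one_pow_card_filter_erase a b ha, neg_one_pow_card_filter_erase b a hb, smul_smul,
    smul_smul, ← add_smul]
  rcases hab.lt_or_gt with h | h <;> simp [h, h.not_gt, mul_comm]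

lemma antighostDeriv_antighostMul_anticomm (a b : Fin ℓ) :
    antighostDeriv K R a * antighostMul K R b + antighostMul K R b * antighostDeriv K R a
      = if a = b then 1 else 0 := by
  refine LinearMap.ext fun F => funext fun T => ?_
  change dAgK a (LAgK b F) T + LAgK b (dAgK a F) T = (if a = b then (1 : Module.End K _) else 0) F T
  rcases eq_or_ne a b with rfl | hab
  · rw [if_pos rfl, Module.End.one_apply]
    by_cases ha : a ∈ T
    · rw [dAgK_apply_of_mem _ ha, LAgK_apply_of_mem _ ha,
        dAgK_apply_of_notMem _ (notMem_erase a T), insert_erase ha, smul_smul,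
        neg_one_pow_card_filter_erase a a ha]
      simp [← mul_pow]
    · rw [dAgK_apply_of_notMem _ ha, LAgK_apply_of_notMem _ ha,
        LAgK_apply_of_mem _ (mem_insert_self a T), erase_insert ha, smul_smul,
        neg_one_pow_card_filter_insert a a ha]
      simp [← mul_pow]
  rw [if_neg hab, LinearMap.zero_apply, Pi.zero_apply]
  by_cases ha : a ∈ T
  · rw [dAgK_apply_of_mem _ ha]
    by_cases hb : b ∈ T
    · rw [LAgK_apply_of_mem _ hb, dAgK_apply_of_mem _ (mem_erase.2 ⟨hab, ha⟩), smul_zero,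
        add_zero]
    · rw [LAgK_apply_of_notMem _ hb, add_zero]
  by_cases hb : b ∈ T
  swap
  · rw [LAgK_apply_of_notMem _ hb, dAgK_apply_of_notMem _ ha,
      LAgK_apply_of_notMem _ (by simp [hb, hab.symm] : b ∉ insert a T), smul_zero, add_zero]
  rw [dAgK_apply_of_notMem _ ha, LAgK_apply_of_mem _ hb,
    LAgK_apply_of_mem _ (mem_insert_of_mem hb), dAgK_apply_of_notMem _
      (fun h => ha (mem_of_mem_erase h) : a ∉ T.erase b), erase_insert_of_ne hab,
    neg_one_pow_card_filter_insert a b ha, neg_one_pow_card_filter_erase b a hb, smul_smul,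
    smul_smul, ← add_smul]
  rcases hab.lt_or_gt with h | h <;> simp [h, h.not_gt, mul_comm]

lemma antighost_canonicalAnticommutation :
    CanonicalAnticommutation (antighostMul K R (ℓ := ℓ)) (antighostDeriv K R) where
  creation_anticomm := antighostMul_anticomm
  annihilation_anticomm := antighostDeriv_anticomm
  annihilation_creation_anticomm := antighostDeriv_antighostMul_anticomm

lemma commute_compLeft_antighostDeriv (φ : R →ₗ[K] R) (b : Fin ℓ) :
    Commute (φ.compLeft (Finset (Fin ℓ))) (antighostDeriv K R b) :=
  LinearMap.ext fun F => funext fun T => by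
    change φ (dAgK b F T) = dAgK b (φ ∘ F) T
    by_cases h : b ∈ T
    · rw [dAgK_apply_of_mem _ h, dAgK_apply_of_mem _ h, map_zero]
    · rw [dAgK_apply_of_notMem _ h, dAgK_apply_of_notMem _ h, map_zsmul, Function.comp_apply]

lemma commute_compLeft_antighostMul (φ : R →ₗ[K] R) (c : Fin ℓ) :
    Commute (φ.compLeft (Finset (Fin ℓ))) (antighostMul K R c) :=
  LinearMap.ext fun F => funext fun T => by
    change φ (LAgK c F T) = LAgK c (φ ∘ F) T
    by_cases h : c ∈ T
    · rw [LAgK_apply_of_mem _ h, LAgK_apply_of_mem _ h, map_zsmul, Function.comp_apply]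
    · rw [LAgK_apply_of_notMem _ h, LAgK_apply_of_notMem _ h, map_zero]

end Antighosts

section CentralParameter

variable {R : Type*} [Ring R] {β : R → R} {ν j : R}

lemma map_mul_left_of_mul_eq_lie (hν : ∀ x, Commute ν x) (hreg : IsLeftRegular ν)
    (hβ : ∀ x, ν * β x = ⁅j, x⁆) (x : R) : β (ν * x) = ν * β x :=
  hreg <| by
    simp only [hβ, Ring.lie_def, ← mul_assoc, (hν j).eq, mul_sub]

lemma map_mul_right_of_mul_eq_lie (hν : ∀ x, Commute ν x) (hreg : IsLeftRegular ν)
    (hβ : ∀ x, ν * β x = ⁅j, x⁆) {j' y : R} (hy : ⁅j, j'⁆ = ν * y) (x : R) :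
    β (x * j') = β x * j' + x * y :=
  hreg <| by
    simp only [hβ, mul_add, ← mul_assoc, (hν x).eq, mul_assoc x, ← hy, Ring.lie_mul_right]

end CentralParameter

section DeformedRepresentation

variable {K R : Type*} [CommRing K] [Ring R] [Algebra K R] {ℓ : ℕ}
  {f : Fin ℓ → Fin ℓ → Fin ℓ → K}

lemma lie_compLeft_compLeft_mulRight (β : R →ₗ[K] R) (J : Fin ℓ → R) (a p : Fin ℓ)
    (hβJ : ∀ x, β (x * J p) = β x * J p + x * ∑ c, f a p c • J c) :
    ⁅β.compLeft (Finset (Fin ℓ)), (LinearMap.mulRight K (J p)).compLeft (Finset (Fin ℓ))⁆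
      = ∑ c, f a p c • (LinearMap.mulRight K (J c)).compLeft (Finset (Fin ℓ)) :=
  LinearMap.ext fun F => funext fun T => by
    simp [Ring.lie_def, hβJ, mul_sum]

variable (f) in
def deformedRep (β : R →ₗ[K] R) (a : Fin ℓ) : Module.End K (OmegaK R ℓ) :=
  β.compLeft (Finset (Fin ℓ))
    + secondQuantization K (antighostMul K R) (antighostDeriv K R) (adMatrix f a)

variable (f) in
/-- With `s = t = ½` this is `∂̂ = ℛ + ν(½u - q)`, since `q = -½ ∑ f_pqr ξ_r ∂_p ∂_q`. -/
def quantumKoszul (J : Fin ℓ → R) (ν : R) (s t : K) : Module.End K (OmegaK R ℓ) :=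
  ∑ p, (LinearMap.mulRight K (J p)).compLeft (Finset (Fin ℓ)) * antighostDeriv K R p
    + (LinearMap.mulLeft K ν).compLeft (Finset (Fin ℓ)) *
      (s • ∑ p, (adMatrix f p).trace • antighostDeriv K R p
        + t • ∑ p, ∑ q, ∑ r,
          f p q r • (antighostMul K R r * antighostDeriv K R p * antighostDeriv K R q))

lemma deformedRep_apply (β : R →ₗ[K] R) (a : Fin ℓ) (F : OmegaK R ℓ) :
    deformedRep f β a F = (fun T => β (F T)) + ∑ b, ∑ c, f a b c • LAgK c (dAgK b F) := by
  funext T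
  simp [deformedRep, secondQuantization_apply, adMatrix, antighostMul, antighostDeriv,
    Finset.sum_apply]

lemma quantumKoszul_apply (J : Fin ℓ → R) (ν : R) (s t : K) (F : OmegaK R ℓ) :
    quantumKoszul f J ν s t F = fun T => ∑ p, dAgK p F T * J p
      + ν * ((s • ∑ p, (∑ q, f p q q) • dAgK p F
        + t • ∑ p, ∑ q, ∑ r, f p q r • LAgK r (dAgK p (dAgK q F))) T) := by
  funext T
  simp [quantumKoszul, adMatrix, Matrix.trace, antighostMul, antighostDeriv, Finset.sum_apply,
    mul_add, Finset.mul_sum]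

lemma lie_deformedRep_quantumKoszul_eq_zero (hf : IsLieStructureConstants f) (β : R →ₗ[K] R) (J : Fin ℓ → R) (ν : R) (a : Fin ℓ)
    (hβJ : ∀ x p, β (x * J p) = β x * J p + x * ∑ c, f a p c • J c)
    (hβν : ∀ x, β (ν * x) = ν * β x) (s t : K) :
    ⁅deformedRep f β a, quantumKoszul f J ν s t⁆ = 0 := by
  have hβν' : Commute (β.compLeft (Finset (Fin ℓ)))
      ((LinearMap.mulLeft K ν).compLeft (Finset (Fin ℓ))) :=
    LinearMap.ext fun F => funext fun T => hβν (F T)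
  exact lie_add_secondQuantization_quantumKoszul_eq_zero hf
    antighost_canonicalAnticommutation _ (commute_compLeft_antighostMul β)
    (commute_compLeft_antighostDeriv β) (fun _ => commute_compLeft_antighostMul _)
    (fun _ => commute_compLeft_antighostDeriv _) (commute_compLeft_antighostMul _)
    (commute_compLeft_antighostDeriv _) hβν' a
    (fun p => lie_compLeft_compLeft_mulRight β J a p (hβJ · p)) s t

end DeformedRepresentation

end QuantumKoszul

theorem deformed_representation_commutes_with_quantum_koszul_general
    (K : Type*) [Field K]
    (R : Type*) [Ring R] [Algebra K R] (ℓ : ℕ)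
    -- the central, regular formal parameter `ν`
    (nu : R) (hnu : ∀ x : R, nu * x = x * nu)
    (hreg : ∀ x : R, nu * x = 0 → x = 0)
    -- structure constants of `g`
    (f : Fin ℓ → Fin ℓ → Fin ℓ → K)
    (hfanti : ∀ a b c, f a b c = - f b a c)
    (hfjac : ∀ a b c d,
      (∑ e, (f a b e * f e c d + f b c e * f e a d + f c a e * f e b d)) = 0)
    -- the quantum moment map
    (J : Fin ℓ → R)
    (hJ : ∀ a b, J a * J b - J b * J a = nu * ∑ c, f a b c • J c)
    -- `brR a = ν⁻¹ ad_⋆(𝐉_a)`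
    (brR : Fin ℓ → R →ₗ[K] R)
    (hbrR : ∀ (a : Fin ℓ) (x : R), nu * brR a x = J a * x - x * J a) :
    (let ℛ : OmegaK R ℓ → OmegaK R ℓ :=                -- "right multiplication"
      fun F T => ∑ a, dAgK a F T * J a
     let u : OmegaK R ℓ → OmegaK R ℓ :=                -- "unimodular term"
      fun F => ∑ a, (∑ b, f a b b) • dAgK a F
     let q : OmegaK R ℓ → OmegaK R ℓ :=                -- "quadratic term"
      fun F => - ((2 : K)⁻¹ •
        (∑ a, ∑ b, ∑ c, f a b c • LAgK c (dAgK a (dAgK b F))))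
     let kosQ : OmegaK R ℓ → OmegaK R ℓ :=             -- the quantum Koszul differential
      fun F T => ℛ F T + nu * ((2 : K)⁻¹ • u F - q F) T
     let ρ : Fin ℓ → OmegaK R ℓ → OmegaK R ℓ :=        -- the deformed representation
      fun a F => (fun T => brR a (F T)) + ∑ b, ∑ c, f a b c • LAgK c (dAgK b F)
     ∀ (a : Fin ℓ) (F : OmegaK R ℓ), ρ a (kosQ F) = kosQ (ρ a F)) := by
  intro _ _ _ kosQ ρ a F
  have hν : ∀ x, Commute nu x := hnu
  have hν_reg : IsLeftRegular nu := fun x y hxy =>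
    sub_eq_zero.1 (hreg _ (by rw [mul_sub]; exact sub_eq_zero.2 hxy))
  have hβν := map_mul_left_of_mul_eq_lie hν hν_reg (hbrR a)
  have hβJ : ∀ x p, brR a (x * J p) = brR a x * J p + x * ∑ c, f a p c • J c :=
    fun x p => map_mul_right_of_mul_eq_lie hν hν_reg (hbrR a) (hJ a p) x
  have hρ : ∀ G, ρ a G = deformedRep f (brR a) a G := fun G => (deformedRep_apply _ a G).symm
  have hkos : ∀ G, kosQ G = quantumKoszul f J nu (2 : K)⁻¹ (2 : K)⁻¹ G := fun G => by
    rw [quantumKoszul_apply, ← sub_neg_eq_add]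
  rw [hkos, hρ, hρ, hkos]
  exact LinearMap.congr_fun (sub_eq_zero.1
    (lie_deformedRep_quantumKoszul_eq_zero ⟨hfanti, hfjac⟩ (brR a) J nu a hβJ hβν _ _)) F

/-- **Cartan-type commutation for the quantum Koszul differential.**
For every `X ∈ g`, the deformed representation operator
`ρ_X(fv) = f·ad_X(v) + ν⁻¹[𝐉(X), f]_⋆ · v` commutes with the quantum Koszul
differential `∂̂ = ℛ + ν(½u - q)`:  `ρ_X ∂̂ - ∂̂ ρ_X = 0`.
(In the paper this follows from the Cartan homotopy formula `ρ_X = i_X δ̂ + δ̂ i_X`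
together with `δ̂ ∂̂ + ∂̂ δ̂ = 0` and `[i_X, ∂̂] = 0`.)  Here `R` is the star-product
algebra `C^∞(M)[[ν]]` with central regular formal parameter `ν`, `𝐉` a quantum moment
map, and `ν · brR a x = 𝐉_a ⋆ x - x ⋆ 𝐉_a` defines `brR a = ν⁻¹ ad_⋆(𝐉_a)`. -/
theorem deformed_representation_commutes_with_quantum_koszul
    (K : Type*) [Field K] [CharZero K]
    (R : Type*) [Ring R] [Algebra K R] (ℓ : ℕ)
    -- the central, regular formal parameter `ν`
    (nu : R) (hnu : ∀ x : R, nu * x = x * nu)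
    (hreg : ∀ x : R, nu * x = 0 → x = 0)
    -- structure constants of `g`
    (f : Fin ℓ → Fin ℓ → Fin ℓ → K)
    (hfanti : ∀ a b c, f a b c = - f b a c)
    (hfjac : ∀ a b c d,
      (∑ e, (f a b e * f e c d + f b c e * f e a d + f c a e * f e b d)) = 0)
    -- the quantum moment map
    (J : Fin ℓ → R)
    (hJ : ∀ a b, J a * J b - J b * J a = nu * ∑ c, f a b c • J c)
    -- `brR a = ν⁻¹ ad_⋆(𝐉_a)`
    (brR : Fin ℓ → R →ₗ[K] R)
    (hbrR : ∀ (a : Fin ℓ) (x : R), nu * brR a x = J a * x - x * J a) :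
    (let ℛ : OmegaK R ℓ → OmegaK R ℓ :=                -- "right multiplication"
      fun F T => ∑ a, dAgK a F T * J a
     let u : OmegaK R ℓ → OmegaK R ℓ :=                -- "unimodular term"
      fun F => ∑ a, (∑ b, f a b b) • dAgK a F
     let q : OmegaK R ℓ → OmegaK R ℓ :=                -- "quadratic term"
      fun F => - ((2 : K)⁻¹ •
        (∑ a, ∑ b, ∑ c, f a b c • LAgK c (dAgK a (dAgK b F))))
     let kosQ : OmegaK R ℓ → OmegaK R ℓ :=             -- the quantum Koszul differential
      fun F T => ℛ F T + nu * ((2 : K)⁻¹ • u F - q F) T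
     let ρ : Fin ℓ → OmegaK R ℓ → OmegaK R ℓ :=        -- the deformed representation
      fun a F => (fun T => brR a (F T)) + ∑ b, ∑ c, f a b c • LAgK c (dAgK b F)
     ∀ (a : Fin ℓ) (F : OmegaK R ℓ), ρ a (kosQ F) = kosQ (ρ a F)) :=
  deformed_representation_commutes_with_quantum_koszul_general K R ℓ nu hnu hreg f hfanti hfjac J hJ
    brR hbrR
end
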